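/- arXiv:2202.07697 — 15 statements merged into one kernel-verified Lean document; each statement's English description precedes it below -/
import Mathlib

section
/- If F is an ABA-free hypergraph on a linearly ordered vertex set, then the family of complements of the hyperedges of F is also ABA-free. -/
/-- A set `G` skips a vertex `a` if `min G < a < max G` and `a ∉ G`. -/
def Skips {α : Type*} [LinearOrder α] (G : Set α) (a : α) : Prop :=
  a ∉ G ∧ (∃ x ∈ G, x < a) ∧ (∃ z ∈ G, a < z)

/-- A hypergraph (family of sets) on a linearly ordered vertex set is ABA-free if
there are no hyperedges `A, B` and vertices `x < y < z` with `x, z ∈ A \ B` and `y ∈ B \ A`. -/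
def ABAFree {α : Type*} [LinearOrder α] (F : Set (Set α)) : Prop :=
  ¬ ∃ A ∈ F, ∃ B ∈ F, ∃ x y z : α, x < y ∧ y < z ∧
      x ∈ A ∧ x ∉ B ∧ z ∈ A ∧ z ∉ B ∧ y ∈ B ∧ y ∉ A

/-- A vertex is unskippable with respect to a family if no member of the family skips it. -/
def Unskippable {α : Type*} [LinearOrder α] (F : Set (Set α)) (a : α) : Prop :=
  ∀ G ∈ F, ¬ Skips G a

/-- If `F` is ABA-free, then the family of complements of its hyperedges is also ABA-free. -/
theorem complements_ABAFree {α : Type*} [LinearOrder α] [Fintype α]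
    (F : Set (Set α)) (hF : ABAFree F) :
    ABAFree (compl '' F) := by
  rintro ⟨_, ⟨A, hA, rfl⟩, _, ⟨B, hB, rfl⟩, x, y, z, hxy, hyz,
    hxA, hxB, hzA, hzB, hyB, hyA⟩
  exact hF ⟨B, hB, A, hA, x, y, z, hxy, hyz,
    not_not.mp hxB, hxA, not_not.mp hzB, hzA, not_not.mp hyA, hyB⟩
end

section
/- If F is an ABA-free hypergraph on a linearly ordered finite vertex set, then every nonempty hyperedge A in F contains an unskippable vertex. -/
lemma key_aux {α : Type*} [LinearOrder α] [Fintype α]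
    (F : Set (Set α)) (hF : ABAFree F) (A : Set α) (hA : A ∈ F) :
    ∀ n : ℕ, ∀ a : α, (A ∩ Set.Ioi a).ncard < n → a ∈ A →
      (∀ G ∈ F, Skips G a → (∀ w ∈ G, a < w → w ∈ A) ∧ ∃ x ∈ G, x < a ∧ x ∉ A) →
      ∃ b ∈ A, Unskippable F b := by
  intro n
  induction n with
  | zero => intro a h; exact absurd h (Nat.not_lt_zero _)
  | succ n ih =>
    intro a hcard ha hgood
    by_cases hun : Unskippable F a
    · exact ⟨a, ha, hun⟩
    unfold Unskippable at hun
    push_neg at hun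
    obtain ⟨G, hG, hGs⟩ := hun
    obtain ⟨haG, ⟨xg0, hxg0G, hxg0a⟩, ⟨z0, hz0G, hz0a⟩⟩ := hGs
    obtain ⟨hGsub, xg, hxgG, hxga, hxgA⟩ :=
      hgood G hG ⟨haG, ⟨xg0, hxg0G, hxg0a⟩, ⟨z0, hz0G, hz0a⟩⟩
    obtain ⟨z, hzmem, hzmin⟩ :=
      Set.exists_min_image (G ∩ Set.Ioi a) id (Set.toFinite _) ⟨z0, hz0G, hz0a⟩
    obtain ⟨hzG, haz⟩ := hzmem
    rw [Set.mem_Ioi] at haz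
    have hzA : z ∈ A := hGsub z hzG haz
    have hgoodz : ∀ B ∈ F, Skips B z →
        (∀ w ∈ B, z < w → w ∈ A) ∧ ∃ x ∈ B, x < z ∧ x ∉ A := by
      intro B hB hBs
      obtain ⟨hzB, ⟨x', hx'B, hx'z⟩, ⟨z', hz'B, hzz'⟩⟩ := hBs
      by_cases haB : a ∈ B
      · have hxgB : xg ∈ B := by
          by_contra hxgB
          exact hF ⟨G, hG, B, hB, xg, a, z, hxga, haz, hxgG, hxgB, hzG, hzB, haB, haG⟩
        refine ⟨?_, xg, hxgB, lt_trans hxga haz, hxgA⟩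
        intro w hwB hzw
        by_contra hwA
        exact hF ⟨B, hB, A, hA, xg, z, w, lt_trans hxga haz, hzw,
          hxgB, hxgA, hwB, hwA, hzA, hzB⟩
      · by_cases hbelow : ∃ u ∈ B, u < a
        · obtain ⟨hsub, x, hxB, hxa, hxA⟩ :=
            hgood B hB ⟨haB, hbelow, ⟨z', hz'B, lt_trans haz hzz'⟩⟩
          exact ⟨fun w hwB hzw => hsub w hwB (lt_trans haz hzw),
            x, hxB, lt_trans hxa haz, hxA⟩
        · exfalso
          push_neg at hbelow
          have hax' : a < x' :=
            lt_of_le_of_ne (hbelow x' hx'B) (fun h => haB (h ▸ hx'B))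
          have hx'G : x' ∉ G := by
            intro hx'G
            exact absurd (hzmin x' ⟨hx'G, hax'⟩) (not_le.mpr hx'z)
          have hxgB : xg ∉ B := fun h => absurd hxga (not_lt.mpr (hbelow xg h))
          exact hF ⟨G, hG, B, hB, xg, x', z, lt_trans hxga hax', hx'z,
            hxgG, hxgB, hzG, hzB, hx'B, hx'G⟩
    have hlt : (A ∩ Set.Ioi z).ncard < (A ∩ Set.Ioi a).ncard := by
      apply Set.ncard_lt_ncard _ (Set.toFinite _)
      constructor
      · rintro v ⟨hvA, hvz⟩
        exact ⟨hvA, lt_trans haz hvz⟩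
      · intro hsub
        have := hsub ⟨hzA, haz⟩
        exact lt_irrefl z this.2
    exact ih z (lt_of_lt_of_le hlt (Nat.lt_succ_iff.mp hcard)) hzA hgoodz

/-- Every nonempty hyperedge of an ABA-free hypergraph on a finite linearly ordered
vertex set contains an unskippable vertex. -/
theorem exists_unskippable_in_hyperedge {α : Type*} [LinearOrder α] [Fintype α]
    (F : Set (Set α)) (hF : ABAFree F) (A : Set α) (hA : A ∈ F) (hne : A.Nonempty) :
    ∃ a ∈ A, Unskippable F a := by
  obtain ⟨a, haA, hmin⟩ := Set.exists_min_image A id (Set.toFinite A) hne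
  apply key_aux F hF A hA ((A ∩ Set.Ioi a).ncard + 1) a (Nat.lt_succ_self _) haA
  intro G hG hGs
  obtain ⟨haG, ⟨x, hxG, hxa⟩, _⟩ := hGs
  have hxA : x ∉ A := fun h => absurd hxa (not_lt.mpr (hmin x h))
  refine ⟨?_, x, hxG, hxa, hxA⟩
  intro w hwG haw
  by_contra hwA
  exact hF ⟨G, hG, A, hA, x, a, w, hxa, haw, hxG, hxA, hwG, hwA, haA, haG⟩
end

section
/- Let F be an ABA-free hypergraph on a linearly ordered vertex set S, let F' be a subfamily of F, and suppose F'+ is an extension of F' to an additional vertex v (i.e., F'+ is ABA-free on S ∪ {v} and each hyperedge of F'+ restricted to S gives the corresponding hyperedge of F'). Then F can also be extended to v: there exists an ABA-free hypergraph F+ on S ∪ {v} whose restriction to S is F and which contains F'+ as a subfamily. -/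
section Separation

variable {α : Type*} [LinearOrder α]

def Separated (s t : Set α) : Prop :=
  (∀ x ∈ s, ∀ y ∈ t, x < y) ∨ (∀ x ∈ s, ∀ y ∈ t, y < x)

theorem separated_toDual_iff {s t : Set α} : Separated (α := αᵒᵈ) s t ↔ Separated s t :=
  or_comm

theorem exists_lt_and_exists_gt_of_not_separated {s t : Set α} (hst : Disjoint s t)
    (h : ¬ Separated s t) :
    (∃ x ∈ s, ∃ y ∈ t, y < x) ∧ (∃ x ∈ s, ∃ y ∈ t, x < y) := by
  simp only [Separated, not_or, not_forall, not_lt] at h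
  obtain ⟨⟨x, hx, y, hy, hyx⟩, ⟨x', hx', y', hy', hxy'⟩⟩ := h
  exact ⟨⟨x, hx, y, hy, hyx.lt_of_ne (hst.ne_of_mem hx hy).symm⟩,
    ⟨x', hx', y', hy', hxy'.lt_of_ne (hst.ne_of_mem hx' hy')⟩⟩

theorem exists_gt_of_not_separated_insert {v : α} {s t : Set α} (hv : v ∉ t)
    (hts : ∀ x ∈ s, ∀ y ∈ t, y < x) (h : ¬ Separated (insert v s) t) :
    ∃ y ∈ t, v < y := by
  by_contra! hle
  refine h (Or.inr ?_)
  rintro x (rfl | hx) y hy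
  · exact (hle y hy).lt_of_ne (ne_of_mem_of_not_mem hy hv)
  · exact hts x hx y hy

theorem nonempty_or_exists_lt_of_not_separated_insert {v : α} {s t : Set α} (hv : v ∉ t)
    (h : ¬ Separated (insert v s) t) : s.Nonempty ∨ ∃ y ∈ t, y < v := by
  by_contra! hs
  obtain ⟨rfl, hle⟩ := hs
  refine h (Or.inl ?_)
  rintro x (rfl | hx) y hy
  · exact (hle y hy).lt_of_ne (ne_of_mem_of_not_mem hy hv).symm
  · exact absurd hx (Set.notMem_empty x)

end Separation

section ABAFree

variable {α : Type*} [LinearOrder α]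

theorem abaFree_iff_forall_pair {F : Set (Set α)} :
    ABAFree F ↔ ∀ A ∈ F, ∀ B ∈ F, ABAFree {A, B} := by
  constructor
  · rintro hF A hA B hB ⟨X, hX, Y, hY, hXY⟩
    have hAB : ({A, B} : Set (Set α)) ⊆ F := Set.insert_subset hA (Set.singleton_subset_iff.2 hB)
    exact hF ⟨X, hAB hX, Y, hAB hY, hXY⟩
  · rintro h ⟨A, hA, B, hB, hAB⟩
    exact h A hA B hB ⟨A, Set.mem_insert A {B}, B, Set.mem_insert_of_mem A rfl, hAB⟩

theorem abaFree_pair_iff {A B : Set α} : ABAFree {A, B} ↔ Separated (A \ B) (B \ A) := by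
  constructor
  · intro h
    by_contra hs
    obtain ⟨⟨x, hx, y, hy, hyx⟩, ⟨x', hx', y', hy', hxy'⟩⟩ :=
      exists_lt_and_exists_gt_of_not_separated disjoint_sdiff_sdiff hs
    rcases lt_trichotomy x' y with hx'y | rfl | hyx'
    · exact h ⟨A, Set.mem_insert A {B}, B, Set.mem_insert_of_mem A rfl,
        x', y, x, hx'y, hyx, hx'.1, hx'.2, hx.1, hx.2, hy.1, hy.2⟩
    · exact hx'.2 hy.1
    · exact h ⟨B, Set.mem_insert_of_mem A rfl, A, Set.mem_insert A {B},
        y, x', y', hyx', hxy', hy.1, hy.2, hy'.1, hy'.2, hx'.1, hx'.2⟩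
  · rintro hs ⟨X, hX, Y, hY, x, y, z, hxy, hyz, hxX, hxY, hzX, hzY, hyY, hyX⟩
    rcases hX with rfl | rfl <;> rcases hY with rfl | rfl
    · exact hxY hxX
    · rcases hs with hs | hs
      · exact (hs z ⟨hzX, hzY⟩ y ⟨hyY, hyX⟩).not_gt hyz
      · exact (hs x ⟨hxX, hxY⟩ y ⟨hyY, hyX⟩).not_gt hxy
    · rcases hs with hs | hs
      · exact (hs y ⟨hyY, hyX⟩ x ⟨hxX, hxY⟩).not_gt hxy
      · exact (hs y ⟨hyY, hyX⟩ z ⟨hzX, hzY⟩).not_gt hyz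
    · exact hxY hxX

theorem abaFree_insert_pair_iff {v : α} {A B : Set α} (hB : v ∉ B) :
    ABAFree {insert v A, B} ↔ Separated (insert v (A \ B)) (B \ A) := by
  rw [abaFree_pair_iff, Set.insert_sdiff_of_notMem _ hB, Set.sdiff_insert_of_notMem hB]

theorem abaFree_insert_insert_iff {v : α} {A B : Set α} (hA : v ∉ A) (hB : v ∉ B) :
    ABAFree {insert v A, insert v B} ↔ ABAFree {A, B} := by
  rw [abaFree_pair_iff, abaFree_pair_iff, Set.insert_sdiff_of_mem _ (Set.mem_insert v B),
    Set.insert_sdiff_of_mem _ (Set.mem_insert v A), Set.sdiff_insert_of_notMem hA,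
    Set.sdiff_insert_of_notMem hB]

end ABAFree

section Cotransitivity

variable {α : Type*} [LinearOrder α] {v : α} {A B C : Set α}

theorem separated_insert_cotrans_of_lt_of_lt (hA : v ∉ A) (hC : v ∉ C)
    (hAB : ∀ x ∈ A \ B, ∀ y ∈ B \ A, x < y) (hAC : ∀ x ∈ A \ C, ∀ y ∈ C \ A, x < y)
    (hBC : Separated (insert v (B \ C)) (C \ B)) :
    Separated (insert v (B \ A)) (A \ B) ∨ Separated (insert v (A \ C)) (C \ A) := by
  by_contra! ⟨hBA', hAC'⟩
  obtain ⟨a, ha, hva⟩ := exists_gt_of_not_separated_insert (fun h => hA h.1)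
    (fun x hx y hy => hAB y hy x hx) hBA'
  obtain ⟨c, hc, hcv⟩ : ∃ c ∈ C \ A, c < v :=
    exists_gt_of_not_separated_insert (α := αᵒᵈ) (fun h => hC h.1) hAC
      (mt (separated_toDual_iff (α := α)).1 hAC')
  have hcB : c ∉ B := fun hcB => (hAB a ha c ⟨hcB, hc.2⟩).not_gt (hcv.trans hva)
  have haC : a ∈ C := by
    by_contra haC
    exact (hAC a ⟨ha.1, haC⟩ c hc).not_gt (hcv.trans hva)
  rcases hBC with hBC | hCB
  · exact (hBC v (Set.mem_insert _ _) c ⟨hc.1, hcB⟩).not_gt hcv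
  · exact (hCB v (Set.mem_insert _ _) a ⟨haC, ha.2⟩).not_gt hva

theorem not_sdiff_lt_cycle {a b c w : α} (ha : a ∈ A \ B) (hb : b ∈ B \ A) (hc : c ∈ C \ A)
    (hw : w ∈ A \ C) (hAB : ∀ x ∈ A \ B, ∀ y ∈ B \ A, x < y)
    (hBC : ∀ x ∈ B \ C, ∀ y ∈ C \ B, x < y) :
    ¬ ∀ x ∈ C \ A, ∀ y ∈ A \ C, x < y := by
  intro hCA
  have hcw : c < w := hCA c hc w hw
  by_cases hcB : c ∈ B
  · have hac : a < c := hAB a ha c ⟨hcB, hc.2⟩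
    have haC : a ∈ C := by
      by_contra haC
      exact (hCA c hc a ⟨ha.1, haC⟩).not_gt hac
    have hwB : w ∈ B := by
      by_contra hwB
      exact (hAB w ⟨hw.1, hwB⟩ c ⟨hcB, hc.2⟩).not_gt hcw
    exact (hBC w ⟨hwB, hw.2⟩ a ⟨haC, ha.2⟩).not_gt (hac.trans hcw)
  · have hwB : w ∉ B := fun hwB => (hBC w ⟨hwB, hw.2⟩ c ⟨hc.1, hcB⟩).not_gt hcw
    have hwb : w < b := hAB w ⟨hw.1, hwB⟩ b hb
    by_cases hbC : b ∈ C
    · exact (hCA b ⟨hbC, hb.2⟩ w hw).not_gt hwb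
    · exact (hBC b ⟨hb.1, hbC⟩ c ⟨hc.1, hcB⟩).not_gt (hcw.trans hwb)

theorem separated_insert_cotrans_of_lt_of_gt (hA : v ∉ A) (hC : v ∉ C)
    (hAB : ∀ x ∈ A \ B, ∀ y ∈ B \ A, x < y) (hCA : ∀ x ∈ A \ C, ∀ y ∈ C \ A, y < x)
    (hBC : Separated (insert v (B \ C)) (C \ B)) :
    Separated (insert v (B \ A)) (A \ B) ∨ Separated (insert v (A \ C)) (C \ A) := by
  by_contra! ⟨hBA', hAC'⟩
  obtain ⟨a, ha, hva⟩ := exists_gt_of_not_separated_insert (fun h => hA h.1)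
    (fun x hx y hy => hAB y hy x hx) hBA'
  obtain ⟨c, hc, hvc⟩ := exists_gt_of_not_separated_insert (fun h => hC h.1) hCA hAC'
  replace hBC : ∀ x ∈ insert v (B \ C), ∀ y ∈ C \ B, x < y := by
    refine hBC.resolve_right fun hCB => ?_
    by_cases hcB : c ∈ B
    · have haC : a ∈ C := by
        by_contra haC
        exact (hCA a ⟨ha.1, haC⟩ c hc).not_gt (hAB a ha c ⟨hcB, hc.2⟩)
      exact (hCB v (Set.mem_insert _ _) a ⟨haC, ha.2⟩).not_gt hva
    · exact (hCB v (Set.mem_insert _ _) c ⟨hc.1, hcB⟩).not_gt hvc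
  obtain ⟨b, hb⟩ : (B \ A).Nonempty := by
    obtain hne | ⟨a', ha', ha'v⟩ :=
      nonempty_or_exists_lt_of_not_separated_insert (fun h => hA h.1) hBA'
    · exact hne
    exfalso
    by_cases ha'C : a' ∈ C
    · exact (hBC v (Set.mem_insert _ _) a' ⟨ha'C, ha'.2⟩).not_gt ha'v
    · exact (hCA a' ⟨ha'.1, ha'C⟩ c hc).not_gt (ha'v.trans hvc)
  obtain ⟨w, hw⟩ : (A \ C).Nonempty := by
    obtain hne | ⟨c', hc', hc'v⟩ :=
      nonempty_or_exists_lt_of_not_separated_insert (fun h => hC h.1) hAC'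
    · exact hne
    exfalso
    have hc'B : c' ∈ B := by
      by_contra hc'B
      exact (hBC v (Set.mem_insert _ _) c' ⟨hc'.1, hc'B⟩).not_gt hc'v
    exact (hAB a ha c' ⟨hc'B, hc'.2⟩).not_gt (hc'v.trans hva)
  exact not_sdiff_lt_cycle ha hb hc hw hAB
    (fun x hx y hy => hBC x (Set.mem_insert_of_mem v hx) y hy) fun x hx y hy => hCA y hy x hx

theorem separated_insert_cotrans (hA : v ∉ A) (hC : v ∉ C)
    (hAB : Separated (A \ B) (B \ A)) (hAC : Separated (A \ C) (C \ A))
    (hBC : Separated (insert v (B \ C)) (C \ B)) :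
    Separated (insert v (B \ A)) (A \ B) ∨ Separated (insert v (A \ C)) (C \ A) := by
  have hBC' : Separated (α := αᵒᵈ) (insert v (B \ C)) (C \ B) :=
    (separated_toDual_iff (α := α)).2 hBC
  rcases hAB with hAB | hBA <;> rcases hAC with hAC | hCA
  · exact separated_insert_cotrans_of_lt_of_lt hA hC hAB hAC hBC
  · exact separated_insert_cotrans_of_lt_of_gt hA hC hAB hCA hBC
  · exact (separated_insert_cotrans_of_lt_of_gt (α := αᵒᵈ) hA hC hBA hAC hBC').imp
      separated_toDual_iff.1 separated_toDual_iff.1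
  · exact (separated_insert_cotrans_of_lt_of_lt (α := αᵒᵈ) hA hC hBA hCA hBC').imp
      separated_toDual_iff.1 separated_toDual_iff.1

theorem abaFree_insert_cotrans (hA : v ∉ A) (hC : v ∉ C) (hAB : ABAFree {A, B})
    (hAC : ABAFree {A, C}) (hBC : ABAFree {insert v B, C}) :
    ABAFree {insert v B, A} ∨ ABAFree {insert v A, C} := by
  rw [abaFree_pair_iff] at hAB hAC
  rw [abaFree_insert_pair_iff hC] at hBC
  rw [abaFree_insert_pair_iff hA, abaFree_insert_pair_iff hC]
  exact separated_insert_cotrans hA hC hAB hAC hBC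

end Cotransitivity

theorem exists_cut_of_cotrans {β : Type*} (r : β → β → Prop) {s t u : Set β}
    (hts : t ⊆ s) (hut : u ⊆ t) (hr : ∀ a ∈ u, ∀ c ∈ t \ u, r a c)
    (hcotrans : ∀ a ∈ s, ∀ b ∈ s, ∀ c ∈ s, r b c → r b a ∨ r a c) :
    ∃ w : Set β, w ∩ t = u ∧ ∀ a ∈ w, ∀ c ∈ s \ w, r a c := by
  set w := u ∪ {a | a ∈ s ∧ a ∉ t ∧ ∃ b ∈ u, ¬ r b a}
  have hu : ∀ b ∈ u, ∀ c ∈ s \ w, r b c := by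
    rintro b hb c ⟨hcs, hcw⟩
    by_cases hct : c ∈ t
    · exact hr b hb c ⟨hct, fun hcu => hcw (Or.inl hcu)⟩
    · by_contra hbc
      exact hcw (Or.inr ⟨hcs, hct, b, hb, hbc⟩)
  refine ⟨w, ?_, ?_⟩
  · rw [Set.union_inter_distrib_right, Set.inter_eq_left.2 hut, Set.union_eq_left]
    rintro a ⟨⟨-, hat, -⟩, hat'⟩
    exact absurd hat' hat
  · rintro a (ha | ⟨has, -, b, hb, hba⟩) c hc
    · exact hu a ha c hc
    · exact (hcotrans a has b (hts (hut hb)) c hc.1 (hu b hb c hc)).resolve_left hba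

section AddVertex

variable {α : Type*} {v : α} {S X A : Set α} {U : Set (Set α)}

theorem eq_insert_of_inter_eq_of_mem (hXS : X ∩ S = A) (hX : X ⊆ insert v S) (hvX : v ∈ X) :
    X = insert v A := by
  subst hXS
  ext x
  constructor
  · intro hx
    rcases hX hx with rfl | hxS
    · exact Set.mem_insert _ _
    · exact Set.mem_insert_of_mem _ ⟨hx, hxS⟩
  · rintro (rfl | hx)
    · exact hvX
    · exact hx.1

theorem eq_of_inter_eq_of_notMem (hXS : X ∩ S = A) (hX : X ⊆ insert v S) (hvX : v ∉ X) :
    X = A := by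
  rw [← hXS, eq_comm, Set.inter_eq_left]
  exact (Set.subset_insert_iff_of_notMem hvX).1 hX

open Classical in
noncomputable def addVertex (v : α) (U : Set (Set α)) (A : Set α) : Set α :=
  if A ∈ U then insert v A else A

theorem addVertex_of_mem (h : A ∈ U) : addVertex v U A = insert v A := if_pos h

theorem addVertex_of_notMem (h : A ∉ U) : addVertex v U A = A := if_neg h

theorem addVertex_inter (hv : v ∉ S) (hA : A ⊆ S) : addVertex v U A ∩ S = A := by
  by_cases h : A ∈ U
  · rw [addVertex_of_mem h, Set.insert_inter_of_notMem hv, Set.inter_eq_left.2 hA]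
  · rw [addVertex_of_notMem h, Set.inter_eq_left.2 hA]

theorem addVertex_subset_insert (hA : A ⊆ S) : addVertex v U A ⊆ insert v S := by
  by_cases h : A ∈ U
  · rw [addVertex_of_mem h]
    exact Set.insert_subset_insert hA
  · rw [addVertex_of_notMem h]
    exact hA.trans (Set.subset_insert v S)

theorem abaFree_image_addVertex [LinearOrder α] {F : Set (Set α)} (hF : ABAFree F)
    (hvF : ∀ A ∈ F, v ∉ A)
    (h : ∀ A ∈ F, ∀ C ∈ F, A ∈ U → C ∉ U → ABAFree {insert v A, C}) :
    ABAFree (addVertex v U '' F) := by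
  rw [abaFree_iff_forall_pair] at hF ⊢
  simp only [Set.forall_mem_image]
  intro A hA C hC
  by_cases hAU : A ∈ U <;> by_cases hCU : C ∈ U
  · rw [addVertex_of_mem hAU, addVertex_of_mem hCU,
      abaFree_insert_insert_iff (hvF A hA) (hvF C hC)]
    exact hF A hA C hC
  · rw [addVertex_of_mem hAU, addVertex_of_notMem hCU]
    exact h A hA C hC hAU hCU
  · rw [addVertex_of_notMem hAU, addVertex_of_mem hCU, Set.pair_comm]
    exact h C hC A hA hCU hAU
  · rw [addVertex_of_notMem hAU, addVertex_of_notMem hCU]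
    exact hF A hA C hC

end AddVertex

theorem extension_with_vertex_general {α : Type*} [LinearOrder α]
    (S : Set α) (v : α) (hv : v ∉ S)
    (F F' : Set (Set α)) (hsub : F' ⊆ F) (hFS : ∀ A ∈ F, A ⊆ S)
    (hABA : ABAFree F)
    (g : Set α → Set α)
    (hg1 : ∀ A ∈ F', g A ∩ S = A) (hg2 : ∀ A ∈ F', g A ⊆ insert v S)
    (hgABA : ABAFree (g '' F')) :
    ∃ g' : Set α → Set α,
      (∀ A ∈ F', g' A = g A) ∧
      (∀ A ∈ F, g' A ∩ S = A) ∧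
      (∀ A ∈ F, g' A ⊆ insert v S) ∧
      ABAFree (g' '' F) := by
  have hvF : ∀ A ∈ F, v ∉ A := fun A hA hvA => hv (hFS A hA hvA)
  have hF := abaFree_iff_forall_pair.1 hABA
  have hg : ∀ A ∈ F', ∀ C ∈ F', ABAFree {g A, g C} := fun A hA C hC =>
    abaFree_iff_forall_pair.1 hgABA _ (Set.mem_image_of_mem g hA) _ (Set.mem_image_of_mem g hC)
  obtain ⟨U, hUF', hU⟩ := exists_cut_of_cotrans (fun A C => ABAFree {insert v A, C}) hsub
    (Set.sep_subset F' fun A => v ∈ g A)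
    (fun A ⟨hA, hvA⟩ C ⟨hC, hvC⟩ => by
      rw [← eq_insert_of_inter_eq_of_mem (hg1 A hA) (hg2 A hA) hvA,
        ← eq_of_inter_eq_of_notMem (hg1 C hC) (hg2 C hC) fun h => hvC ⟨hC, h⟩]
      exact hg A hA C hC)
    fun A hA B hB C hC =>
      abaFree_insert_cotrans (hvF A hA) (hvF C hC) (hF A hA B hB) (hF A hA C hC)
  refine ⟨addVertex v U, fun A hA => ?_, fun A hA => addVertex_inter hv (hFS A hA),
    fun A hA => addVertex_subset_insert (hFS A hA),
    abaFree_image_addVertex hABA hvF fun A _ C hC hAU hCU => hU A hAU C ⟨hC, hCU⟩⟩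
  have hAU : A ∈ U ↔ v ∈ g A := by simpa [hA] using Set.ext_iff.1 hUF' A
  by_cases hvA : v ∈ g A
  · rw [addVertex_of_mem (hAU.2 hvA), eq_insert_of_inter_eq_of_mem (hg1 A hA) (hg2 A hA) hvA]
  · rw [addVertex_of_notMem (mt hAU.1 hvA), eq_of_inter_eq_of_notMem (hg1 A hA) (hg2 A hA) hvA]

/-- Extension with a vertex: if a subfamily `F'` of the ABA-free hypergraph `F` (all
hyperedges contained in `S`) admits an ABA-free extension `g` to the additional vertex
`v ∉ S`, then all of `F` can be extended to `v` compatibly. -/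
theorem extension_with_vertex {α : Type*} [LinearOrder α] [Fintype α]
    (S : Set α) (v : α) (hv : v ∉ S)
    (F F' : Set (Set α)) (hsub : F' ⊆ F) (hFS : ∀ A ∈ F, A ⊆ S)
    (hABA : ABAFree F)
    (g : Set α → Set α)
    (hg1 : ∀ A ∈ F', g A ∩ S = A) (hg2 : ∀ A ∈ F', g A ⊆ insert v S)
    (hgABA : ABAFree (g '' F')) :
    ∃ g' : Set α → Set α,
      (∀ A ∈ F', g' A = g A) ∧
      (∀ A ∈ F, g' A ∩ S = A) ∧
      (∀ A ∈ F, g' A ⊆ insert v S) ∧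
      ABAFree (g' '' F) :=
  extension_with_vertex_general S v hv F F' hsub hFS hABA g hg1 hg2 hgABA
end

section
/- Let S be a linearly ordered set and v a single new vertex position, so that S ∪ {v} is linearly ordered. For any ABA-free hypergraph F on S ∪ {v} and any subset H ⊆ S such that F restricted to S together with H is ABA-free on S, either H or H ∪ {v} can be added to F so that the resulting family is ABA-free. -/
/-- One-step extension: given an ABA-free hypergraph `F` on `S ∪ {v}` and a set `H ⊆ S`
such that the restriction of `F` to `S` together with `H` is ABA-free, `H` can be
extended to `S ∪ {v}` (adding `v` or not) keeping `F` together with it ABA-free. -/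
theorem extend_one_hyperedge {α : Type*} [LinearOrder α] [Fintype α]
    (S : Set α) (v : α) (hv : v ∉ S)
    (F : Set (Set α)) (hFS : ∀ A ∈ F, A ⊆ insert v S)
    (hABA : ABAFree F)
    (H : Set α) (hH : H ⊆ S)
    (hrest : ABAFree (insert H ((fun A => A ∩ S) '' F))) :
    ABAFree (insert H F) ∨ ABAFree (insert (insert v H) F) := by
  by_contra hcon
  push_neg at hcon
  obtain ⟨h1, h2⟩ := hcon
  -- basic helpers
  have hS : ∀ {C : Set α}, C ∈ F → ∀ {x : α}, x ∈ C → x ≠ v → x ∈ S := by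
    intro C hC x hx hxv
    rcases hFS C hC hx with h | h
    · exact absurd h hxv
    · exact h
  have hFF : ∀ C ∈ F, ∀ D ∈ F, ∀ p q r : α, p < q → q < r → p ∈ C → p ∉ D →
      r ∈ C → r ∉ D → q ∈ D → q ∉ C → False := by
    intro C hC D hD p q r h1' h2' a b c d e f
    exact hABA ⟨C, hC, D, hD, p, q, r, h1', h2', a, b, c, d, e, f⟩
  have pHC : ∀ C ∈ F, ∀ p q r : α, p < q → q < r → p ∈ H → p ∉ C → r ∈ H → r ∉ C →
      q ∈ C → q ≠ v → q ∉ H → False := by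
    intro C hC p q r h1' h2' hpH hpC hrH hrC hqC hqv hqH
    exact hrest ⟨H, Set.mem_insert _ _, C ∩ S, Set.mem_insert_iff.mpr (Or.inr ⟨C, hC, rfl⟩),
      p, q, r, h1', h2', hpH, fun h => hpC h.1, hrH, fun h => hrC h.1,
      ⟨hqC, hS hC hqC hqv⟩, hqH⟩
  have pCH : ∀ C ∈ F, ∀ p q r : α, p < q → q < r → p ∈ C → p ≠ v → p ∉ H →
      r ∈ C → r ≠ v → r ∉ H → q ∈ H → q ∉ C → False := by
    intro C hC p q r h1' h2' hpC hpv hpH hrC hrv hrH hqH hqC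
    exact hrest ⟨C ∩ S, Set.mem_insert_iff.mpr (Or.inr ⟨C, hC, rfl⟩), H, Set.mem_insert _ _,
      p, q, r, h1', h2', ⟨hpC, hS hC hpC hpv⟩, hpH, ⟨hrC, hS hC hrC hrv⟩, hrH,
      hqH, fun h => hqC h.1⟩
  -- extract structure from failure of adding H
  have case1 : ∃ A ∈ F, v ∈ A ∧
      ((∃ p q, p < v ∧ v < q ∧ p ∈ H ∧ p ∉ A ∧ q ∈ H ∧ q ∉ A) ∨
       (∃ p q, v < p ∧ p < q ∧ p ∈ H ∧ p ∉ A ∧ q ∈ A ∧ q ∉ H) ∨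
       (∃ p q, p < q ∧ q < v ∧ p ∈ A ∧ p ∉ H ∧ q ∈ H ∧ q ∉ A)) := by
    rw [ABAFree, not_not] at h1
    obtain ⟨A', hA', B', hB', x, y, z, hxy, hyz, hxA, hxB, hzA, hzB, hyB, hyA⟩ := h1
    rcases hA' with rfl | hA'F
    · rcases hB' with rfl | hB'F
      · exact absurd hyB hyA
      · by_cases hyv : y = v
        · subst hyv
          exact ⟨B', hB'F, hyB, Or.inl ⟨x, z, hxy, hyz, hxA, hxB, hzA, hzB⟩⟩
        · exact (pHC B' hB'F x y z hxy hyz hxA hxB hzA hzB hyB hyv hyA).elim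
    · rcases hB' with rfl | hB'F
      · by_cases hxv : x = v
        · subst hxv
          exact ⟨A', hA'F, hxA, Or.inr (Or.inl ⟨y, z, hxy, hyz, hyB, hyA, hzA, hzB⟩)⟩
        · by_cases hzv : z = v
          · subst hzv
            exact ⟨A', hA'F, hzA, Or.inr (Or.inr ⟨x, y, hxy, hyz, hxA, hxB, hyB, hyA⟩)⟩
          · exact (pCH A' hA'F x y z hxy hyz hxA hxv hxB hzA hzv hzB hyB hyA).elim
      · exact (hFF A' hA'F B' hB'F x y z hxy hyz hxA hxB hzA hzB hyB hyA).elim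
  -- extract structure from failure of adding insert v H
  have case2 : ∃ B ∈ F, v ∉ B ∧
      ((∃ p q, v < p ∧ p < q ∧ p ∈ B ∧ p ∉ H ∧ q ∈ H ∧ q ∉ B) ∨
       (∃ p q, p < q ∧ q < v ∧ p ∈ H ∧ p ∉ B ∧ q ∈ B ∧ q ∉ H) ∨
       (∃ p q, p < v ∧ v < q ∧ p ∈ B ∧ p ∉ H ∧ q ∈ B ∧ q ∉ H)) := by
    rw [ABAFree, not_not] at h2
    obtain ⟨A', hA', B', hB', x, y, z, hxy, hyz, hxA, hxB, hzA, hzB, hyB, hyA⟩ := h2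
    rcases hA' with rfl | hA'F
    · rcases hB' with rfl | hB'F
      · exact absurd hyB hyA
      · -- A' = insert v H, B' ∈ F
        have hyv : y ≠ v := fun h => hyA (h ▸ Set.mem_insert _ _)
        have hyH : y ∉ H := fun h => hyA (Set.mem_insert_of_mem _ h)
        rcases Set.mem_insert_iff.mp hxA with hxv | hxH
        · subst hxv
          have hzH : z ∈ H := by
            rcases Set.mem_insert_iff.mp hzA with h | h
            · exact absurd h (hxy.trans hyz).ne'
            · exact h
          exact ⟨B', hB'F, hxB, Or.inl ⟨y, z, hxy, hyz, hyB, hyH, hzH, hzB⟩⟩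
        · rcases Set.mem_insert_iff.mp hzA with hzv | hzH
          · subst hzv
            exact ⟨B', hB'F, hzB, Or.inr (Or.inl ⟨x, y, hxy, hyz, hxH, hxB, hyB, hyH⟩)⟩
          · exact (pHC B' hB'F x y z hxy hyz hxH hxB hzH hzB hyB hyv hyH).elim
    · rcases hB' with rfl | hB'F
      · -- A' ∈ F, B' = insert v H
        have hxv : x ≠ v := fun h => hxB (h ▸ Set.mem_insert _ _)
        have hxH : x ∉ H := fun h => hxB (Set.mem_insert_of_mem _ h)
        have hzv : z ≠ v := fun h => hzB (h ▸ Set.mem_insert _ _)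
        have hzH : z ∉ H := fun h => hzB (Set.mem_insert_of_mem _ h)
        rcases Set.mem_insert_iff.mp hyB with hyv | hyH
        · subst hyv
          exact ⟨A', hA'F, hyA, Or.inr (Or.inr ⟨x, z, hxy, hyz, hxA, hxH, hzA, hzH⟩)⟩
        · exact (pCH A' hA'F x y z hxy hyz hxA hxv hxH hzA hzv hzH hyH hyA).elim
      · exact (hFF A' hA'F B' hB'F x y z hxy hyz hxA hxB hzA hzB hyB hyA).elim
  obtain ⟨A, hAF, hvA, hc1⟩ := case1
  obtain ⟨B, hBF, hvB, hc2⟩ := case2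
  have pAB : ∀ p q r : α, p < q → q < r → p ∈ A → p ∉ B → r ∈ A → r ∉ B →
      q ∈ B → q ∉ A → False := hFF A hAF B hBF
  have pBA : ∀ p q r : α, p < q → q < r → p ∈ B → p ∉ A → r ∈ B → r ∉ A →
      q ∈ A → q ∉ B → False := hFF B hBF A hAF
  have pHA := pHC A hAF
  have pAH := pCH A hAF
  have pHB := pHC B hBF
  have pBH := pCH B hBF
  rcases hc1 with ⟨a1, a2, ha1v, hva2, ha1H, ha1A, ha2H, ha2A⟩ |
    ⟨b1, b2, hvb1, hb12, hb1H, hb1A, hb2A, hb2H⟩ |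
    ⟨c1, c2, hc12, hc2v, hc1A, hc1H, hc2H, hc2A⟩
  · rcases hc2 with ⟨d1, d2, hvd1, hd12, hd1B, hd1H, hd2H, hd2B⟩ |
      ⟨e1, e2, he12, he2v, he1H, he1B, he2B, he2H⟩ |
      ⟨f1, f2, hf1v, hvf2, hf1B, hf1H, hf2B, hf2H⟩
    · -- (1a,2a)
      by_cases ha1B : a1 ∈ B
      · by_cases hd1A : d1 ∈ A
        · by_cases ha2B : a2 ∈ B
          · exact pBA a1 v a2 ha1v hva2 ha1B ha1A ha2B ha2A hvA hvB
          · rcases lt_or_gt_of_ne (show a2 ≠ d1 from fun h => hd1H (h ▸ ha2H)) with h | h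
            · exact pHB a2 d1 d2 h hd12 ha2H ha2B hd2H hd2B hd1B hvd1.ne' hd1H
            · exact pHA a1 d1 a2 (ha1v.trans hvd1) h ha1H ha1A ha2H ha2A hd1A hvd1.ne' hd1H
        · exact pBA a1 v d1 ha1v hvd1 ha1B ha1A hd1B hd1A hvA hvB
      · exact pHB a1 d1 d2 (ha1v.trans hvd1) hd12 ha1H ha1B hd2H hd2B hd1B hvd1.ne' hd1H
    · -- (1a,2b)
      by_cases ha2B : a2 ∈ B
      · by_cases he2A : e2 ∈ A
        · by_cases ha1B : a1 ∈ B
          · exact pBA a1 v a2 ha1v hva2 ha1B ha1A ha2B ha2A hvA hvB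
          · rcases lt_or_gt_of_ne (show a1 ≠ e2 from fun h => he2H (h ▸ ha1H)) with h | h
            · exact pHA a1 e2 a2 h (he2v.trans hva2) ha1H ha1A ha2H ha2A he2A he2v.ne he2H
            · exact pHB e1 e2 a1 he12 h he1H he1B ha1H ha1B he2B he2v.ne he2H
        · exact pBA e2 v a2 he2v hva2 he2B he2A ha2B ha2A hvA hvB
      · exact pHB e1 e2 a2 he12 (he2v.trans hva2) he1H he1B ha2H ha2B he2B he2v.ne he2H
    · -- (1a,2c)
      by_cases hf1A : f1 ∈ A
      · rcases lt_or_gt_of_ne (show a1 ≠ f1 from fun h => hf1H (h ▸ ha1H)) with h | h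
        · exact pHA a1 f1 a2 h (hf1v.trans hva2) ha1H ha1A ha2H ha2A hf1A hf1v.ne hf1H
        · by_cases hf2A : f2 ∈ A
          · exact pAH f1 a1 f2 h (ha1v.trans hvf2) hf1A hf1v.ne hf1H hf2A hvf2.ne' hf2H ha1H ha1A
          · by_cases ha1B : a1 ∈ B
            · exact pBA a1 v f2 ha1v hvf2 ha1B ha1A hf2B hf2A hvA hvB
            · exact pBH f1 a1 f2 h (ha1v.trans hvf2) hf1B hf1v.ne hf1H hf2B hvf2.ne' hf2H ha1H ha1B
      · by_cases hf2A : f2 ∈ A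
        · rcases lt_or_gt_of_ne (show f2 ≠ a2 from fun h => hf2H (h ▸ ha2H)) with h | h
          · exact pHA a1 f2 a2 (ha1v.trans hvf2) h ha1H ha1A ha2H ha2A hf2A hvf2.ne' hf2H
          · by_cases ha2B : a2 ∈ B
            · exact pBA f1 v a2 hf1v hva2 hf1B hf1A ha2B ha2A hvA hvB
            · exact pBH f1 a2 f2 (hf1v.trans hva2) h hf1B hf1v.ne hf1H hf2B hvf2.ne' hf2H ha2H ha2B
        · exact pBA f1 v f2 hf1v hvf2 hf1B hf1A hf2B hf2A hvA hvB
  · have hb2v : b2 ≠ v := (hvb1.trans hb12).ne'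
    rcases hc2 with ⟨d1, d2, hvd1, hd12, hd1B, hd1H, hd2H, hd2B⟩ |
      ⟨e1, e2, he12, he2v, he1H, he1B, he2B, he2H⟩ |
      ⟨f1, f2, hf1v, hvf2, hf1B, hf1H, hf2B, hf2H⟩
    · -- (1b,2a)
      by_cases hd1A : d1 ∈ A
      · rcases lt_or_gt_of_ne (show d1 ≠ b1 from fun h => hd1H (h ▸ hb1H)) with h | h
        · exact pAH d1 b1 b2 h hb12 hd1A hvd1.ne' hd1H hb2A hb2v hb2H hb1H hb1A
        · by_cases hd2A : d2 ∈ A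
          · by_cases hb1B : b1 ∈ B
            · exact pAB v b1 d2 hvb1 (h.trans hd12) hvA hvB hd2A hd2B hb1B hb1A
            · exact pHB b1 d1 d2 h hd12 hb1H hb1B hd2H hd2B hd1B hvd1.ne' hd1H
          · exact pHA b1 d1 d2 h hd12 hb1H hb1A hd2H hd2A hd1A hvd1.ne' hd1H
      · by_cases hb1B : b1 ∈ B
        · by_cases hb2B : b2 ∈ B
          · rcases lt_or_gt_of_ne (show d2 ≠ b2 from fun h => hb2H (h ▸ hd2H)) with h | h
            · exact pBH d1 d2 b2 hd12 h hd1B hvd1.ne' hd1H hb2B hb2v hb2H hd2H hd2B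
            · by_cases hd2A : d2 ∈ A
              · exact pAB v b1 d2 hvb1 (hb12.trans h) hvA hvB hd2A hd2B hb1B hb1A
              · exact pHA b1 b2 d2 hb12 h hb1H hb1A hd2H hd2A hb2A hb2v hb2H
          · exact pAB v b1 b2 hvb1 hb12 hvA hvB hb2A hb2B hb1B hb1A
        · rcases lt_or_gt_of_ne (show b1 ≠ d1 from fun h => hd1H (h ▸ hb1H)) with h | h
          · exact pHB b1 d1 d2 h hd12 hb1H hb1B hd2H hd2B hd1B hvd1.ne' hd1H
          · by_cases hb2B : b2 ∈ B
            · exact pBH d1 b1 b2 h hb12 hd1B hvd1.ne' hd1H hb2B hb2v hb2H hb1H hb1B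
            · exact pAB v d1 b2 hvd1 (h.trans hb12) hvA hvB hb2A hb2B hd1B hd1A
    · -- (1b,2b)
      by_cases he2A : e2 ∈ A
      · exact pAH e2 b1 b2 (he2v.trans hvb1) hb12 he2A he2v.ne he2H hb2A hb2v hb2H hb1H hb1A
      · by_cases hb1B : b1 ∈ B
        · exact pBA e2 v b1 he2v hvb1 he2B he2A hb1B hb1A hvA hvB
        · exact pHB e1 e2 b1 he12 (he2v.trans hvb1) he1H he1B hb1H hb1B he2B he2v.ne he2H
    · -- (1b,2c)
      by_cases hf1A : f1 ∈ A
      · exact pAH f1 b1 b2 (hf1v.trans hvb1) hb12 hf1A hf1v.ne hf1H hb2A hb2v hb2H hb1H hb1A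
      · by_cases hb1B : b1 ∈ B
        · exact pBA f1 v b1 hf1v hvb1 hf1B hf1A hb1B hb1A hvA hvB
        · by_cases hf2A : f2 ∈ A
          · rcases lt_or_gt_of_ne (show f2 ≠ b1 from fun h => hf2H (h ▸ hb1H)) with h | h
            · exact pAH f2 b1 b2 h hb12 hf2A hvf2.ne' hf2H hb2A hb2v hb2H hb1H hb1A
            · exact pBH f1 b1 f2 (hf1v.trans hvb1) h hf1B hf1v.ne hf1H hf2B hvf2.ne' hf2H hb1H hb1B
          · exact pBA f1 v f2 hf1v hvf2 hf1B hf1A hf2B hf2A hvA hvB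
  · have hc1v : c1 ≠ v := (hc12.trans hc2v).ne
    rcases hc2 with ⟨d1, d2, hvd1, hd12, hd1B, hd1H, hd2H, hd2B⟩ |
      ⟨e1, e2, he12, he2v, he1H, he1B, he2B, he2H⟩ |
      ⟨f1, f2, hf1v, hvf2, hf1B, hf1H, hf2B, hf2H⟩
    · -- (1c,2a)
      by_cases hd1A : d1 ∈ A
      · exact pAH c1 c2 d1 hc12 (hc2v.trans hvd1) hc1A hc1v hc1H hd1A hvd1.ne' hd1H hc2H hc2A
      · by_cases hc2B : c2 ∈ B
        · exact pBA c2 v d1 hc2v hvd1 hc2B hc2A hd1B hd1A hvA hvB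
        · exact pHB c2 d1 d2 (hc2v.trans hvd1) hd12 hc2H hc2B hd2H hd2B hd1B hvd1.ne' hd1H
    · -- (1c,2b)
      have he1v : e1 ≠ v := (he12.trans he2v).ne
      by_cases he2A : e2 ∈ A
      · rcases lt_or_gt_of_ne (show c2 ≠ e2 from fun h => he2H (h ▸ hc2H)) with h | h
        · exact pAH c1 c2 e2 hc12 h hc1A hc1v hc1H he2A he2v.ne he2H hc2H hc2A
        · by_cases he1A : e1 ∈ A
          · by_cases hc2B : c2 ∈ B
            · exact pAB e1 c2 v (he12.trans h) hc2v he1A he1B hvA hvB hc2B hc2A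
            · exact pHB e1 e2 c2 he12 h he1H he1B hc2H hc2B he2B he2v.ne he2H
          · exact pHA e1 e2 c2 he12 h he1H he1A hc2H hc2A he2A he2v.ne he2H
      · by_cases hc2B : c2 ∈ B
        · by_cases hc1B : c1 ∈ B
          · rcases lt_or_gt_of_ne (show c1 ≠ e1 from fun h => hc1H (h ▸ he1H)) with h | h
            · exact pBH c1 e1 e2 h he12 hc1B hc1v hc1H he2B he2v.ne he2H he1H he1B
            · by_cases he1A : e1 ∈ A
              · exact pAB e1 c2 v (h.trans hc12) hc2v he1A he1B hvA hvB hc2B hc2A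
              · exact pHA e1 c1 c2 h hc12 he1H he1A hc2H hc2A hc1A hc1v hc1H
          · exact pAB c1 c2 v hc12 hc2v hc1A hc1B hvA hvB hc2B hc2A
        · rcases lt_or_gt_of_ne (show e2 ≠ c2 from fun h => (h ▸ he2H) hc2H) with h | h
          · exact pHB e1 e2 c2 he12 h he1H he1B hc2H hc2B he2B he2v.ne he2H
          · by_cases hc1B : c1 ∈ B
            · exact pBH c1 c2 e2 hc12 h hc1B hc1v hc1H he2B he2v.ne he2H hc2H hc2B
            · exact pAB c1 e2 v (hc12.trans h) he2v hc1A hc1B hvA hvB he2B he2A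
    · -- (1c,2c)
      by_cases hf2A : f2 ∈ A
      · exact pAH c1 c2 f2 hc12 (hc2v.trans hvf2) hc1A hc1v hc1H hf2A hvf2.ne' hf2H hc2H hc2A
      · by_cases hc2B : c2 ∈ B
        · exact pBA c2 v f2 hc2v hvf2 hc2B hc2A hf2B hf2A hvA hvB
        · by_cases hf1A : f1 ∈ A
          · rcases lt_or_gt_of_ne (show c2 ≠ f1 from fun h => hf1H (h ▸ hc2H)) with h | h
            · exact pAH c1 c2 f1 hc12 h hc1A hc1v hc1H hf1A hf1v.ne hf1H hc2H hc2A
            · exact pBH f1 c2 f2 h (hc2v.trans hvf2) hf1B hf1v.ne hf1H hf2B hvf2.ne' hf2H hc2H hc2B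
          · exact pBA f1 v f2 hf1v hvf2 hf1B hf1A hf2B hf2A hvA hvB
end

section
/- Let F be an ABA-free hypergraph on a linearly ordered finite vertex set S and let v be a vertex that is not unskippable. Then deleting v does not change the set of unskippable vertices: the unskippable vertices of the induced hypergraph on S \ {v} coincide with the unskippable vertices of F. -/
/-- Deleting a skippable vertex does not change the set of unskippable vertices. -/
theorem delete_skippable_vertex {α : Type*} [LinearOrder α] [Fintype α]
    (F : Set (Set α)) (hABA : ABAFree F)
    (v : α) (hv : ¬ Unskippable F v) :
    {a | a ≠ v ∧ Unskippable ((fun A => A ∩ {v}ᶜ) '' F) a} = {a | Unskippable F a} := by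
  -- extract an edge G₀ skipping v
  rw [Unskippable] at hv
  push_neg at hv
  obtain ⟨G₀, hG₀F, hG₀skip⟩ := hv
  obtain ⟨hvG₀, ⟨x₀, hx₀G, hx₀v⟩, ⟨z₀, hz₀G, hvz₀⟩⟩ := hG₀skip
  ext a
  simp only [Set.mem_setOf_eq]
  constructor
  · rintro ⟨hav, hind⟩ G hGF ⟨haG, ⟨x, hxG, hxa⟩, ⟨z, hzG, haz⟩⟩
    have hnot : ¬ Skips (G ∩ {v}ᶜ) a := hind _ ⟨G, hGF, rfl⟩
    have hmem : a ∉ G ∩ {v}ᶜ := fun h => haG h.1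
    have h1 : (∀ x' ∈ G ∩ {v}ᶜ, ¬ x' < a) ∨ (∀ z' ∈ G ∩ {v}ᶜ, ¬ a < z') := by
      by_contra hc
      push_neg at hc
      exact hnot ⟨hmem, hc.1, hc.2⟩
    rcases h1 with hlow | hhigh
    · -- every element of G below a equals v, so v ∈ G and v < a
      have hxv : x = v := by
        by_contra hne
        exact hlow x ⟨hxG, hne⟩ hxa
      have hvG : v ∈ G := hxv ▸ hxG
      have hva : v < a := hxv ▸ hxa
      by_cases hw : ∃ w ∈ G₀, v < w ∧ w ∉ G
      · obtain ⟨w, hwG₀, hxw, hwG⟩ := hw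
        have hx₀G' : x₀ ∉ G := fun h => hlow x₀ ⟨h, ne_of_lt hx₀v⟩ (hx₀v.trans hva)
        exact hABA ⟨G₀, hG₀F, G, hGF, x₀, v, w, hx₀v, hxw, hx₀G, hx₀G', hwG₀, hwG, hvG, hvG₀⟩
      · push_neg at hw
        have hz₀G' : z₀ ∈ G := hw z₀ hz₀G hvz₀
        have hz₀v : z₀ ≠ v := fun h => hvG₀ (h ▸ hz₀G)
        have haz₀ : a < z₀ := by
          rcases lt_trichotomy z₀ a with h | h | h
          · exact absurd h (hlow z₀ ⟨hz₀G', hz₀v⟩)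
          · exact absurd (h ▸ hz₀G') haG
          · exact h
        have haG₀ : a ∉ G₀ := fun h => haG (hw a h hva)
        exact hind _ ⟨G₀, hG₀F, rfl⟩
          ⟨fun h => haG₀ h.1, ⟨x₀, ⟨hx₀G, ne_of_lt hx₀v⟩, hx₀v.trans hva⟩,
            ⟨z₀, ⟨hz₀G, hz₀v⟩, haz₀⟩⟩
    · -- every element of G above a equals v, so v ∈ G and a < v
      have hzv : z = v := by
        by_contra hne
        exact hhigh z ⟨hzG, hne⟩ haz
      have hvG : v ∈ G := hzv ▸ hzG
      have hav' : a < v := hzv ▸ haz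
      by_cases hw : ∃ w ∈ G₀, w < v ∧ w ∉ G
      · obtain ⟨w, hwG₀, hwz, hwG⟩ := hw
        have hz₀G' : z₀ ∉ G := fun h => hhigh z₀ ⟨h, (ne_of_lt hvz₀).symm⟩ (hav'.trans hvz₀)
        exact hABA ⟨G₀, hG₀F, G, hGF, w, v, z₀, hwz, hvz₀, hwG₀, hwG, hz₀G, hz₀G', hvG, hvG₀⟩
      · push_neg at hw
        have hx₀G' : x₀ ∈ G := hw x₀ hx₀G hx₀v
        have hx₀v' : x₀ ≠ v := ne_of_lt hx₀v
        have hx₀a : x₀ < a := by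
          rcases lt_trichotomy x₀ a with h | h | h
          · exact h
          · exact absurd (h ▸ hx₀G') haG
          · exact absurd h (hhigh x₀ ⟨hx₀G', hx₀v'⟩)
        have haG₀ : a ∉ G₀ := fun h => haG (hw a h hav')
        exact hind _ ⟨G₀, hG₀F, rfl⟩
          ⟨fun h => haG₀ h.1, ⟨x₀, ⟨hx₀G, hx₀v'⟩, hx₀a⟩,
            ⟨z₀, ⟨hz₀G, fun h => hvG₀ (h ▸ hz₀G)⟩, hav'.trans hvz₀⟩⟩
  · intro hun
    have hav : a ≠ v := by
      rintro rfl
      exact hun G₀ hG₀F ⟨hvG₀, ⟨x₀, hx₀G, hx₀v⟩, ⟨z₀, hz₀G, hvz₀⟩⟩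
    refine ⟨hav, ?_⟩
    rintro B ⟨A, hAF, rfl⟩ ⟨hnm, ⟨x, ⟨hxA, _⟩, hxa⟩, ⟨z, ⟨hzA, _⟩, haz⟩⟩
    by_cases haA : a ∈ A
    · exact hnm ⟨haA, hav⟩
    · exact hun A hAF ⟨haA, ⟨x, hxA, hxa⟩, ⟨z, hzA, haz⟩⟩
end

section
/- Let F be an ABA-free hypergraph on a linearly ordered finite vertex set, let v be a skippable (not unskippable) vertex, and let t and t' be the unskippable vertices immediately before and immediately after v in the order. Then there exists a hyperedge H in F with t, t' in H and v not in H. -/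
section Helpers

variable {α : Type*} [LinearOrder α]

/-- The basic forbidden pattern, packaged. -/
lemma aba_helper {F : Set (Set α)} (hABA : ABAFree F) {A B : Set α} (hA : A ∈ F) (hB : B ∈ F)
    {x y z : α} (hxy : x < y) (hyz : y < z) (hxA : x ∈ A) (hxB : x ∉ B) (hzA : z ∈ A)
    (hzB : z ∉ B) (hyB : y ∈ B) (hyA : y ∉ A) : False :=
  hABA ⟨A, hA, B, hB, x, y, z, hxy, hyz, hxA, hxB, hzA, hzB, hyB, hyA⟩

/-- An unskippable vertex squeezed between two members of a hyperedge belongs to it. -/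
lemma unskippable_mem {F : Set (Set α)} {y : α} (hU : Unskippable F y) {H : Set α} (hH : H ∈ F)
    {a b : α} (ha : a ∈ H) (hb : b ∈ H) (hay : a < y) (hyb : y < b) : y ∈ H := by
  by_contra hy
  exact hU H hH ⟨hy, ⟨a, ha, hay⟩, ⟨b, hb, hyb⟩⟩

lemma ncard_Ioo_lt [Fintype α] {a b c : α} (h1 : a < b) (h2 : b < c) :
    (Set.Ioo b c).ncard < (Set.Ioo a c).ncard := by
  refine Set.ncard_lt_ncard ⟨Set.Ioo_subset_Ioo_left h1.le, fun hsub => ?_⟩ (Set.toFinite _)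
  exact lt_irrefl b (hsub ⟨h1, h2⟩).1

lemma ncard_Ioo_lt' [Fintype α] {a b c : α} (h1 : a < b) (h2 : b < c) :
    (Set.Ioo a b).ncard < (Set.Ioo a c).ncard := by
  refine Set.ncard_lt_ncard ⟨Set.Ioo_subset_Ioo_right h2.le, fun hsub => ?_⟩ (Set.toFinite _)
  exact lt_irrefl b (hsub ⟨h1, h2⟩).2

end Helpers

/-- One-sided lemma: if `t'` is unskippable, `u < t'` is skippable and everything strictly
between `u` and `t'` is skippable, then there is a hyperedge containing `t'`, avoiding `u`,
and reaching strictly below `u`. -/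
lemma lemR {α : Type*} [LinearOrder α] [Fintype α] (F : Set (Set α)) (hABA : ABAFree F)
    (t' : α) (ht' : Unskippable F t') :
    ∀ n (u : α), (Set.Ioo u t').ncard = n → u < t' → ¬ Unskippable F u →
      (∀ a, u < a → a < t' → ¬ Unskippable F a) →
      ∃ H ∈ F, t' ∈ H ∧ u ∉ H ∧ ∃ x ∈ H, x < u := by
  intro n
  induction n using Nat.strong_induction_on with
  | _ n IH =>
  intro u hcard hut' hskipu hbet
  -- a hyperedge skipping u
  have hex : ∃ G ∈ F, Skips G u := by
    rw [Unskippable] at hskipu; push_neg at hskipu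
    simpa using hskipu
  obtain ⟨A, hAF, huA, ⟨xA, hxA, hxAu⟩, ⟨zA, hzA, huzA⟩⟩ := hex
  -- the set of all vertices covered by "good" hyperedges
  set Z : Set α := {x | ∃ H, (H ∈ F ∧ u ∉ H ∧ ∃ y ∈ H, y < u) ∧ x ∈ H} with hZ
  have hzAZ : zA ∈ Z := ⟨A, ⟨hAF, huA, xA, hxA, hxAu⟩, hzA⟩
  obtain ⟨w, hwZ, hwmax⟩ := Set.exists_max_image Z id (Set.toFinite _) ⟨zA, hzAZ⟩
  obtain ⟨Hs, ⟨hHsF, huHs, xl, hxlHs, hxlu⟩, hwHs⟩ := hwZ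
  have hT_le_w : ∀ H, H ∈ F → u ∉ H → (∃ y ∈ H, y < u) → ∀ x ∈ H, x ≤ w :=
    fun H h1 h2 h3 x hx => hwmax x ⟨H, ⟨h1, h2, h3⟩, hx⟩
  have huw : u < w := lt_of_lt_of_le huzA (hwmax zA hzAZ)
  rcases le_or_gt t' w with hwt' | hwt'
  · -- the maximal edge reaches t'; done
    have ht'Hs : t' ∈ Hs := by
      rcases eq_or_lt_of_le hwt' with h | h
      · exact h ▸ hwHs
      · exact unskippable_mem ht' hHsF hxlHs hwHs (hxlu.trans hut') h
    exact ⟨Hs, hHsF, ht'Hs, huHs, xl, hxlHs, hxlu⟩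
  · -- w < t' : derive a contradiction
    exfalso
    have ht'Hs : t' ∉ Hs := fun h =>
      absurd (hT_le_w Hs hHsF huHs ⟨xl, hxlHs, hxlu⟩ t' h) (not_le.2 hwt')
    obtain ⟨H₁, hH₁F, ht'H₁, hwH₁, x₁, hx₁H₁, hx₁w⟩ :=
      IH _ (hcard ▸ ncard_Ioo_lt huw hwt') w rfl hwt' (hbet w huw hwt')
        (fun a h1 h2 => hbet a (huw.trans h1) h2)
    have incl₁ : ∀ x ∈ H₁, x < w → x ∈ Hs := by
      intro x hx hxw
      by_contra hxn
      exact aba_helper hABA hH₁F hHsF hxw hwt' hx hxn ht'H₁ ht'Hs hwHs hwH₁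
    have huH₁ : u ∉ H₁ := fun h => huHs (incl₁ u h huw)
    by_cases hlow : ∃ x ∈ H₁, x < u
    · exact absurd (hT_le_w H₁ hH₁F huH₁ hlow t' ht'H₁) (not_le.2 hwt')
    · obtain ⟨p, hpH₁, hpmin⟩ := Set.exists_min_image H₁ id (Set.toFinite _) ⟨t', ht'H₁⟩
      have hup : u < p :=
        lt_of_le_of_ne (not_lt.1 fun h => hlow ⟨p, hpH₁, h⟩) (fun e => huH₁ (e ▸ hpH₁))
      have hpw : p < w := lt_of_le_of_lt (hpmin x₁ hx₁H₁) hx₁w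
      -- inner descent
      have inner : ∀ m (p : α) (H₁ : Set α), (Set.Ioo u p).ncard = m → H₁ ∈ F → t' ∈ H₁ →
          p ∈ H₁ → (∀ x ∈ H₁, p ≤ x) → u < p → p < w → w ∉ H₁ → False := by
        intro m
        induction m using Nat.strong_induction_on with
        | _ m IHm =>
        intro p H₁ hc hH₁F ht'H₁ hpH₁ hpmin hup hpw hwH₁
        have hpt' : p < t' := hpw.trans hwt'
        obtain ⟨H₂, hH₂F, ht'H₂, hpH₂, x₂, hx₂H₂, hx₂p⟩ :=
          IH _ (hcard ▸ ncard_Ioo_lt hup hpt') p rfl hpt' (hbet p hup hpt')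
            (fun a h1 h2 => hbet a (hup.trans h1) h2)
        have incl₂ : ∀ z ∈ H₂, p < z → z ∈ H₁ := by
          intro z hz hpz
          by_contra hzn
          exact aba_helper hABA hH₂F hH₁F hx₂p hpz hx₂H₂
            (fun h => absurd (hpmin x₂ h) (not_le.2 hx₂p)) hz hzn hpH₁ hpH₂
        have hwH₂ : w ∉ H₂ := fun h => hwH₁ (incl₂ w h hpw)
        have incl₃ : ∀ x ∈ H₂, x < w → x ∈ Hs := by
          intro x hx hxw
          by_contra hxn
          exact aba_helper hABA hH₂F hHsF hxw hwt' hx hxn ht'H₂ ht'Hs hwHs hwH₂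
        have huH₂ : u ∉ H₂ := fun h => huHs (incl₃ u h huw)
        by_cases hlow₂ : ∃ x ∈ H₂, x < u
        · exact absurd (hT_le_w H₂ hH₂F huH₂ hlow₂ t' ht'H₂) (not_le.2 hwt')
        · obtain ⟨p₂, hp₂H₂, hp₂min⟩ := Set.exists_min_image H₂ id (Set.toFinite _) ⟨t', ht'H₂⟩
          have hup₂ : u < p₂ :=
            lt_of_le_of_ne (not_lt.1 fun h => hlow₂ ⟨p₂, hp₂H₂, h⟩) (fun e => huH₂ (e ▸ hp₂H₂))
          have hp₂p : p₂ < p := lt_of_le_of_lt (hp₂min x₂ hx₂H₂) hx₂p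
          exact IHm _ (hc ▸ ncard_Ioo_lt' hup₂ hp₂p) p₂ H₂ rfl hH₂F ht'H₂ hp₂H₂ hp₂min hup₂
            (hp₂p.trans hpw) hwH₂
      exact inner _ p H₁ rfl hH₁F ht'H₁ hpH₁ hpmin hup hpw hwH₁

/-- Mirror of `lemR`, obtained by order dualization. -/
lemma lemL {α : Type*} [LinearOrder α] [Fintype α] (F : Set (Set α)) (hABA : ABAFree F)
    (t : α) (ht : Unskippable F t) (m : α) (htm : t < m) (hskipm : ¬ Unskippable F m)
    (hbet : ∀ a, t < a → a < m → ¬ Unskippable F a) :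
    ∃ H ∈ F, t ∈ H ∧ m ∉ H ∧ ∃ z ∈ H, m < z := by
  letI : Fintype αᵒᵈ := ‹Fintype α›
  have hABA' : ABAFree (α := αᵒᵈ) F := by
    rintro ⟨A, hA, B, hB, x, y, z, h1, h2, hxA, hxB, hzA, hzB, hyB, hyA⟩
    exact hABA ⟨A, hA, B, hB, z, y, x, h2, h1, hzA, hzB, hxA, hxB, hyB, hyA⟩
  have hdual : ∀ (a : α) (G : Set α), Skips (α := αᵒᵈ) G a → Skips G a := by
    rintro a G ⟨h1, h2, h3⟩
    exact ⟨h1, h3, h2⟩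
  have hdual' : ∀ (a : α) (G : Set α), Skips G a → Skips (α := αᵒᵈ) G a := by
    rintro a G ⟨h1, h2, h3⟩
    exact ⟨h1, h3, h2⟩
  have ht2 : Unskippable (α := αᵒᵈ) F t := fun G hG hsk => ht G hG (hdual t G hsk)
  have hskipm2 : ¬ Unskippable (α := αᵒᵈ) F m := by
    intro hU
    exact hskipm (fun G hG hsk => hU G hG (hdual' m G hsk))
  obtain ⟨H, hH, h1, h2, x, hx, hlt⟩ :=
    lemR (α := αᵒᵈ) F hABA' t ht2 _ m rfl htm hskipm2
      (fun a h1 h2 hU => hbet a h2 h1 (fun G hG hsk => hU G hG (hdual' a G hsk)))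
  exact ⟨H, hH, h1, h2, x, hx, hlt⟩

/-- If `v` is skippable and `t < v < t'` are the unskippable vertices immediately before
and after `v`, then some hyperedge contains `t` and `t'` but avoids `v`. -/
theorem hyperedge_avoiding_skippable {α : Type*} [LinearOrder α] [Fintype α]
    (F : Set (Set α)) (hABA : ABAFree F)
    (v t t' : α) (hskip : ¬ Unskippable F v)
    (ht : Unskippable F t) (ht' : Unskippable F t')
    (htv : t < v) (hvt' : v < t')
    (hbefore : ∀ a, t < a → a < v → ¬ Unskippable F a)
    (hafter : ∀ a, v < a → a < t' → ¬ Unskippable F a) :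
    ∃ H ∈ F, t ∈ H ∧ t' ∈ H ∧ v ∉ H := by
  have htt' : t < t' := htv.trans hvt'
  suffices h : ∀ n (v : α), (Set.Ioo v t').ncard = n → ¬ Unskippable F v → t < v → v < t' →
      (∀ a, t < a → a < v → ¬ Unskippable F a) → (∀ a, v < a → a < t' → ¬ Unskippable F a) →
      ∃ H ∈ F, t ∈ H ∧ t' ∈ H ∧ v ∉ H by
    exact h _ v rfl hskip htv hvt' hbefore hafter
  intro n
  induction n using Nat.strong_induction_on with
  | _ n IH =>
  intro v hcard hskip htv hvt' hbefore hafter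
  -- get an edge containing t' avoiding v, reaching below v
  obtain ⟨K, hKF, ht'K, hvK, xB, hxBK, hxBv⟩ := lemR F hABA t' ht' _ v rfl hvt' hskip hafter
  obtain ⟨c, hcK, hcmin⟩ := Set.exists_min_image K id (Set.toFinite _) ⟨t', ht'K⟩
  have hcv : c < v := lt_of_le_of_lt (hcmin xB hxBK) hxBv
  by_cases hct : c ≤ t
  · have htK : t ∈ K := by
      rcases eq_or_lt_of_le hct with h | h
      · exact h ▸ hcK
      · exact unskippable_mem ht hKF hcK ht'K h htt'
    exact ⟨K, hKF, htK, ht'K, hvK⟩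
  · have htc : t < c := not_le.1 hct
    have htK : t ∉ K := fun h => hct (hcmin t h)
    -- the ascent
    have asc : ∀ m (u : α) (H₁ : Set α), (Set.Ioo u t').ncard = m → H₁ ∈ F → t ∈ H₁ →
        v ∉ H₁ → t' ∉ H₁ → c ∉ H₁ → u ∈ H₁ → (∀ x ∈ H₁, x ≤ u) → c < u →
        ∃ H ∈ F, t ∈ H ∧ t' ∈ H ∧ v ∉ H := by
      intro m
      induction m using Nat.strong_induction_on with
      | _ m IHm =>
      intro u H₁ hc hH₁F htH₁ hvH₁ ht'H₁ hcH₁ huH₁ humax hcu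
      have hut' : u < t' := by
        rcases lt_trichotomy u t' with h | h | h
        · exact h
        · exact absurd (h ▸ huH₁) ht'H₁
        · exact absurd (unskippable_mem ht' hH₁F htH₁ huH₁ htt' h) ht'H₁
      rcases lt_trichotomy u v with huv | huv | huv
      · -- u < v : extend via lemL at u
        obtain ⟨H', hH'F, htH', huH', z', hz'H', huz'⟩ :=
          lemL F hABA t ht u (htc.trans hcu) (hbefore u (htc.trans hcu) huv)
            (fun a h1 h2 => hbefore a h1 (h2.trans huv))
        have hz'H₁ : z' ∉ H₁ := fun h => absurd (humax z' h) (not_le.2 huz')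
        have incl : ∀ x ∈ H', x < u → x ∈ H₁ := by
          intro x hx hxu
          by_contra hxn
          exact aba_helper hABA hH'F hH₁F hxu huz' hx hxn hz'H' hz'H₁ huH₁ huH'
        have hcH' : c ∉ H' := fun h => hcH₁ (incl c h hcu)
        have hvH' : v ∉ H' := fun hv =>
          aba_helper hABA hH'F hKF htc hcv htH' htK hv hvK hcK hcH'
        by_cases ht'H' : t' ∈ H'
        · exact ⟨H', hH'F, htH', ht'H', hvH'⟩
        · obtain ⟨u', hu'H', hu'max⟩ := Set.exists_max_image H' id (Set.toFinite _) ⟨z', hz'H'⟩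
          have huu' : u < u' := lt_of_lt_of_le huz' (hu'max z' hz'H')
          have hu't' : u' < t' := by
            rcases lt_trichotomy u' t' with h | h | h
            · exact h
            · exact absurd (h ▸ hu'H') ht'H'
            · exact absurd (unskippable_mem ht' hH'F htH' hu'H' htt' h) ht'H'
          exact IHm _ (hc ▸ ncard_Ioo_lt huu' hu't') u' H' rfl hH'F htH' hvH' ht'H' hcH'
            hu'H' hu'max (hcu.trans huu')
      · exact absurd (huv ▸ huH₁) hvH₁
      · -- v < u : use the main induction hypothesis at u
        obtain ⟨H₄, hH₄F, htH₄, ht'H₄, huH₄⟩ :=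
          IH _ (hcard ▸ ncard_Ioo_lt huv hut') u rfl (hafter u huv hut') (htv.trans huv) hut'
            (fun a h1 h2 => by
              rcases lt_trichotomy a v with h | h | h
              · exact hbefore a h1 h
              · exact h ▸ hskip
              · exact hafter a h (h2.trans hut'))
            (fun a h1 h2 => hafter a (huv.trans h1) h2)
        have incl : ∀ x ∈ H₄, x < u → x ∈ H₁ := by
          intro x hx hxu
          by_contra hxn
          exact aba_helper hABA hH₄F hH₁F hxu hut' hx hxn ht'H₄ ht'H₁ huH₁ huH₄
        have hvH₄ : v ∉ H₄ := fun h => hvH₁ (incl v h huv)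
        exact ⟨H₄, hH₄F, htH₄, ht'H₄, hvH₄⟩
    -- start: edge containing t avoiding c
    obtain ⟨H₁, hH₁F, htH₁, hcH₁, z₁, hz₁, hcz₁⟩ :=
      lemL F hABA t ht c htc (hbefore c htc hcv) (fun a h1 h2 => hbefore a h1 (h2.trans hcv))
    have hvH₁ : v ∉ H₁ := fun hv =>
      aba_helper hABA hH₁F hKF htc hcv htH₁ htK hv hvK hcK hcH₁
    by_cases ht'H₁ : t' ∈ H₁
    · exact ⟨H₁, hH₁F, htH₁, ht'H₁, hvH₁⟩
    · obtain ⟨u, huH₁, humax⟩ := Set.exists_max_image H₁ id (Set.toFinite _) ⟨z₁, hz₁⟩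
      exact asc _ u H₁ rfl hH₁F htH₁ hvH₁ ht'H₁ hcH₁ huH₁ humax
        (lt_of_lt_of_le hcz₁ (humax z₁ hz₁))
end

section
/- In a pseudohalfplane hypergraph H on a vertex set S with at least 3 vertices, the set of extremal vertices (topvertices together with bottomvertices) has size at least 3. -/
section ThreeExtremalAux

variable {α : Type*} [LinearOrder α]

/-- Auxiliary: `v` has a "co-skipper" in `G`: a member containing `v`
with holes on both sides of `v`. -/
def CoSk (G : Set (Set α)) (v : α) : Prop :=
  ∃ B ∈ G, v ∈ B ∧ (∃ x, x < v ∧ x ∉ B) ∧ (∃ z, v < z ∧ z ∉ B)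

lemma aba_dichotomy {G : Set (Set α)} (hABA : ABAFree G) {C D : Set α}
    (hC : C ∈ G) (hD : D ∈ G) {u : α} (huD : u ∈ D) (huC : u ∉ C) :
    (∀ z ∈ C, u < z → z ∈ D) ∨ (∀ x ∈ C, x < u → x ∈ D) := by
  by_contra hcon
  push_neg at hcon
  obtain ⟨⟨z, hzC, huz, hzD⟩, ⟨x, hxC, hxu, hxD⟩⟩ := hcon
  exact hABA ⟨C, hC, D, hD, x, u, z, hxu, huz, hxC, hxD, hzC, hzD, huD, huC⟩

lemma aba_compl {F : Set (Set α)} (hABA : ABAFree F) : ABAFree (compl '' F) := by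
  rintro ⟨A', hA', B', hB', x, y, z, hxy, hyz, hxA, hxB, hzA, hzB, hyB, hyA⟩
  obtain ⟨A, hAF, rfl⟩ := hA'
  obtain ⟨B, hBF, rfl⟩ := hB'
  simp only [Set.mem_compl_iff, not_not] at hxA hxB hzA hzB hyB hyA
  exact hABA ⟨B, hBF, A, hAF, x, y, z, hxy, hyz, hxB, hxA, hzB, hzA, hyA, hyB⟩

lemma aba_subset {G G' : Set (Set α)} (h : G' ⊆ G) (hABA : ABAFree G) : ABAFree G' := by
  rintro ⟨A, hA, B, hB, rest⟩
  exact hABA ⟨A, h hA, B, h hB, rest⟩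

variable [Fintype α]

lemma exists_max_hole (B : Set α) (v x : α) (hx : x < v) (hxB : x ∉ B) :
    ∃ h, h < v ∧ h ∉ B ∧ ∀ y, y < v → y ∉ B → y ≤ h := by
  classical
  set S : Finset α := Finset.univ.filter (fun y => y < v ∧ y ∉ B) with hS
  have hne : S.Nonempty := ⟨x, by simp [hS, hx, hxB]⟩
  have hmem := S.max'_mem hne
  simp only [hS, Finset.mem_filter, Finset.mem_univ, true_and] at hmem
  refine ⟨S.max' hne, hmem.1, hmem.2, fun y hyv hyB => ?_⟩
  exact S.le_max' y (by simp [hS, hyv, hyB])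

lemma exists_min_hole (B : Set α) (v x : α) (hx : v < x) (hxB : x ∉ B) :
    ∃ h, v < h ∧ h ∉ B ∧ ∀ y, v < y → y ∉ B → h ≤ y := by
  classical
  set S : Finset α := Finset.univ.filter (fun y => v < y ∧ y ∉ B) with hS
  have hne : S.Nonempty := ⟨x, by simp [hS, hx, hxB]⟩
  have hmem := S.min'_mem hne
  simp only [hS, Finset.mem_filter, Finset.mem_univ, true_and] at hmem
  refine ⟨S.min' hne, hmem.1, hmem.2, fun y hyv hyB => ?_⟩
  exact S.min'_le y (by simp [hS, hyv, hyB])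

/-- Core descent: if every co-skipper of `v` contains the minimum `s`,
then starting from a co-skipper `C` of `v` whose maximal hole below `v` is `h`,
we reach a contradiction (by descending on `h`). -/
lemma ds_inner {G : Set (Set α)} (hABA : ABAFree G) (s t : α)
    (hs : ∀ x, s ≤ x)
    (hyp : ∀ v, s < v → v < t → CoSk G v) :
    ∀ h v, s < v → v < t →
      (∀ D ∈ G, v ∈ D → (∃ x, x < v ∧ x ∉ D) → (∃ z, v < z ∧ z ∉ D) → s ∈ D) →
      ∀ C ∈ G, v ∈ C → (∃ z, v < z ∧ z ∉ C) →
      h < v → h ∉ C → (∀ y, y < v → y ∉ C → y ≤ h) → False := by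
  intro h
  induction h using WellFoundedLT.induction with
  | ind h IH =>
  intro v hsv hvt hbad C hCG hvC hzC hhv hhC hmax
  have hsC : s ∈ C := hbad C hCG hvC ⟨h, hhv, hhC⟩ hzC
  have hsh : s < h := lt_of_le_of_ne (hs h) (fun e => hhC (e ▸ hsC))
  have hht : h < t := lt_trans hhv hvt
  by_cases hb : ∀ D ∈ G, h ∈ D → (∃ x, x < h ∧ x ∉ D) → (∃ z, h < z ∧ z ∉ D) → s ∈ D
  · obtain ⟨D, hDG, hhD, ⟨p, hph, hpD⟩, hzD⟩ := hyp h hsh hht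
    obtain ⟨h', hh'h, hh'D, hmax'⟩ := exists_max_hole D h p hph hpD
    exact IH h' hh'h h hsh hht hb D hDG hhD hzD hh'h hh'D hmax'
  · push_neg at hb
    obtain ⟨D, hDG, hhD, hxD, hzD, hsD⟩ := hb
    rcases aba_dichotomy hABA hCG hDG hhD hhC with hup | hdown
    · have hvD : v ∈ D := hup v hvC hhv
      obtain ⟨p, hph, hpD⟩ := hxD
      obtain ⟨q, hhq, hqD⟩ := hzD
      have hvq : v < q := by
        rcases lt_trichotomy q v with hlt | heq | hgt
        · exfalso
          by_cases hqC : q ∈ C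
          · exact hqD (hup q hqC hhq)
          · exact absurd (hmax q hlt hqC) (not_le.mpr hhq)
        · exact absurd (heq ▸ hvD) hqD
        · exact hgt
      exact hsD (hbad D hDG hvD ⟨p, lt_trans hph hhv, hpD⟩ ⟨q, hvq, hqD⟩)
    · exact hsD (hdown s hsC hsh)

/-- Descent lemma: every middle vertex has a co-skipper missing the minimum. -/
lemma ds {G : Set (Set α)} (hABA : ABAFree G) (s t : α)
    (hs : ∀ x, s ≤ x)
    (hyp : ∀ v, s < v → v < t → CoSk G v) :
    ∀ v, s < v → v < t →
      ∃ B ∈ G, v ∈ B ∧ (∃ x, x < v ∧ x ∉ B) ∧ (∃ z, v < z ∧ z ∉ B) ∧ s ∉ B := by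
  intro v hsv hvt
  by_contra hcon
  push_neg at hcon
  have hbad : ∀ D ∈ G, v ∈ D → (∃ x, x < v ∧ x ∉ D) → (∃ z, v < z ∧ z ∉ D) → s ∈ D :=
    fun D hDG hvD hx hz => not_not.mp (fun hsD => hsD (hcon D hDG hvD hx hz))
  obtain ⟨C, hCG, hvC, ⟨x, hxv, hxC⟩, hzC⟩ := hyp v hsv hvt
  obtain ⟨h, hhv, hhC, hmax⟩ := exists_max_hole C v x hxv hxC
  exact ds_inner hABA s t hs hyp h v hsv hvt hbad C hCG hvC hzC hhv hhC hmax

/-- Mirror of `ds_inner`. -/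
lemma dt_inner {G : Set (Set α)} (hABA : ABAFree G) (s t : α)
    (ht : ∀ x, x ≤ t)
    (hyp : ∀ v, s < v → v < t → CoSk G v) :
    ∀ h v, s < v → v < t →
      (∀ D ∈ G, v ∈ D → (∃ x, x < v ∧ x ∉ D) → (∃ z, v < z ∧ z ∉ D) → t ∈ D) →
      ∀ C ∈ G, v ∈ C → (∃ x, x < v ∧ x ∉ C) →
      v < h → h ∉ C → (∀ y, v < y → y ∉ C → h ≤ y) → False := by
  intro h
  induction h using WellFoundedGT.induction with
  | ind h IH =>
  intro v hsv hvt hbad C hCG hvC hxC hvh hhC hmin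
  have htC : t ∈ C := hbad C hCG hvC hxC ⟨h, hvh, hhC⟩
  have hht : h < t := lt_of_le_of_ne (ht h) (fun e => hhC (e ▸ htC))
  have hsh : s < h := lt_trans hsv hvh
  by_cases hb : ∀ D ∈ G, h ∈ D → (∃ x, x < h ∧ x ∉ D) → (∃ z, h < z ∧ z ∉ D) → t ∈ D
  · obtain ⟨D, hDG, hhD, hxD, ⟨q, hhq, hqD⟩⟩ := hyp h hsh hht
    obtain ⟨h', hhh', hh'D, hmin'⟩ := exists_min_hole D h q hhq hqD
    exact IH h' hhh' h hsh hht hb D hDG hhD hxD hhh' hh'D hmin'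
  · push_neg at hb
    obtain ⟨D, hDG, hhD, hxD, hzD, htD⟩ := hb
    rcases aba_dichotomy hABA hCG hDG hhD hhC with hup | hdown
    · exact htD (hup t htC hht)
    · have hvD : v ∈ D := hdown v hvC hvh
      obtain ⟨p, hph, hpD⟩ := hxD
      obtain ⟨q, hhq, hqD⟩ := hzD
      have hpv : p < v := by
        rcases lt_trichotomy p v with hlt | heq | hgt
        · exact hlt
        · exact absurd (heq ▸ hvD) hpD
        · exfalso
          by_cases hpC : p ∈ C
          · exact hpD (hdown p hpC hph)
          · exact absurd (hmin p hgt hpC) (not_le.mpr hph)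
      exact htD (hbad D hDG hvD ⟨p, hpv, hpD⟩ ⟨q, lt_trans hvh hhq, hqD⟩)

/-- Mirror descent lemma: every middle vertex has a co-skipper missing the maximum. -/
lemma dt {G : Set (Set α)} (hABA : ABAFree G) (s t : α)
    (ht : ∀ x, x ≤ t)
    (hyp : ∀ v, s < v → v < t → CoSk G v) :
    ∀ v, s < v → v < t →
      ∃ B ∈ G, v ∈ B ∧ (∃ x, x < v ∧ x ∉ B) ∧ (∃ z, v < z ∧ z ∉ B) ∧ t ∉ B := by
  intro v hsv hvt
  by_contra hcon
  push_neg at hcon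
  have hbad : ∀ D ∈ G, v ∈ D → (∃ x, x < v ∧ x ∉ D) → (∃ z, v < z ∧ z ∉ D) → t ∈ D :=
    fun D hDG hvD hx hz => not_not.mp (fun htD => htD (hcon D hDG hvD hx hz))
  obtain ⟨C, hCG, hvC, hxC, ⟨z, hvz, hzC⟩⟩ := hyp v hsv hvt
  obtain ⟨h, hvh, hhC, hmin⟩ := exists_min_hole C v z hvz hzC
  exact dt_inner hABA s t ht hyp h v hsv hvt hbad C hCG hvC hxC hvh hhC hmin

/-- Every middle vertex lies in a member of the family missing both extremes. -/
lemma lemmaP {F : Set (Set α)} (hABA : ABAFree F) (s t : α)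
    (hs : ∀ x, s ≤ x) (ht : ∀ x, x ≤ t)
    (hyp : ∀ v, s < v → v < t → CoSk F v) :
    ∀ v, s < v → v < t → ∃ B ∈ F, v ∈ B ∧ s ∉ B ∧ t ∉ B := by
  intro v hsv hvt
  set Fs : Set (Set α) := {B | B ∈ F ∧ s ∉ B} with hFs
  have hFsub : Fs ⊆ F := fun B hB => hB.1
  have hABAs : ABAFree Fs := aba_subset hFsub hABA
  have hyps : ∀ u, s < u → u < t → CoSk Fs u := by
    intro u hsu hut
    obtain ⟨B, hBF, huB, hx, hz, hsB⟩ := ds hABA s t hs hyp u hsu hut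
    exact ⟨B, ⟨hBF, hsB⟩, huB, hx, hz⟩
  obtain ⟨B, hBFs, hvB, _, _, htB⟩ := dt hABAs s t ht hyps v hsv hvt
  exact ⟨B, hBFs.1, hvB, hBFs.2, htB⟩

end ThreeExtremalAux

/-- If the vertex set has at least 3 vertices, a pseudohalfplane hypergraph has at
least 3 extremal vertices (topvertices together with bottomvertices). -/
theorem three_extremal_vertices {α : Type*} [LinearOrder α] [Fintype α]
    (hcard : 3 ≤ Fintype.card α)
    (F : Set (Set α)) (hABA : ABAFree F)
    (H : Set (Set α)) (hH : H ⊆ F ∪ compl '' F) :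
    3 ≤ Set.ncard {a : α | Unskippable F a ∨ Unskippable (compl '' F) a} := by
  classical
  have hne : (Finset.univ : Finset α).Nonempty := by
    rw [← Finset.card_pos, Finset.card_univ]; omega
  obtain ⟨s, -, hs'⟩ := Finset.exists_min_image Finset.univ id hne
  obtain ⟨t, -, ht'⟩ := Finset.exists_max_image Finset.univ id hne
  have hs : ∀ x : α, s ≤ x := fun x => hs' x (Finset.mem_univ x)
  have ht : ∀ x : α, x ≤ t := fun x => ht' x (Finset.mem_univ x)
  set M : Set α := {a | Unskippable F a ∨ Unskippable (compl '' F) a} with hM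
  have hsM : s ∈ M := Or.inl (fun G _ hsk => by
    obtain ⟨-, ⟨x, -, hlt⟩, -⟩ := hsk
    exact absurd hlt (not_lt.mpr (hs x)))
  have htM : t ∈ M := Or.inl (fun G _ hsk => by
    obtain ⟨-, -, ⟨z, -, hlt⟩⟩ := hsk
    exact absurd hlt (not_lt.mpr (ht z)))
  -- there exists a middle vertex
  have hmid : ∃ m : α, s < m ∧ m < t := by
    have h2 : ∃ m : α, m ≠ s ∧ m ≠ t := by
      by_contra hcon
      push_neg at hcon
      have hsub : (Finset.univ : Finset α) ⊆ {s, t} := by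
        intro x _
        rcases eq_or_ne x s with rfl | hxs
        · simp
        · simp [hcon x hxs]
      have := Finset.card_le_card hsub
      have h2 : ({s, t} : Finset α).card ≤ 2 := Finset.card_le_two
      rw [Finset.card_univ] at this
      omega
    obtain ⟨m, hms, hmt⟩ := h2
    exact ⟨m, lt_of_le_of_ne (hs m) (Ne.symm hms), lt_of_le_of_ne (ht m) hmt⟩
  -- some middle vertex is extremal
  have hkey : ∃ m : α, s < m ∧ m < t ∧ m ∈ M := by
    by_contra hcon
    push_neg at hcon
    have hboth : ∀ v, s < v → v < t →
        (∃ X ∈ F, Skips X v) ∧ (∃ Y ∈ compl '' F, Skips Y v) := by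
      intro v h1 h2
      have h3 := hcon v h1 h2
      simp only [hM, Set.mem_setOf_eq, not_or, Unskippable, not_forall] at h3
      obtain ⟨hF, hG⟩ := h3
      constructor
      · obtain ⟨X, hX, hsk⟩ := hF
        exact ⟨X, hX, not_not.mp hsk⟩
      · obtain ⟨Y, hY, hsk⟩ := hG
        exact ⟨Y, hY, not_not.mp hsk⟩
    have hypF : ∀ v, s < v → v < t → CoSk F v := by
      intro v h1 h2
      obtain ⟨-, ⟨Y, hY, hsk⟩⟩ := hboth v h1 h2
      obtain ⟨X, hXF, rfl⟩ := hY
      obtain ⟨hvX, ⟨x, hxX, hxv⟩, ⟨z, hzX, hvz⟩⟩ := hsk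
      exact ⟨X, hXF, not_not.mp hvX, ⟨x, hxv, hxX⟩, ⟨z, hvz, hzX⟩⟩
    have hypG : ∀ v, s < v → v < t → CoSk (compl '' F) v := by
      intro v h1 h2
      obtain ⟨⟨X, hXF, hsk⟩, -⟩ := hboth v h1 h2
      obtain ⟨hvX, ⟨x, hxX, hxv⟩, ⟨z, hzX, hvz⟩⟩ := hsk
      refine ⟨Xᶜ, ⟨X, hXF, rfl⟩, hvX, ⟨x, hxv, ?_⟩, ⟨z, hvz, ?_⟩⟩
      · simp [hxX]
      · simp [hzX]
    obtain ⟨m, h1, h2⟩ := hmid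
    obtain ⟨X, hXF, hmX, hsX, htX⟩ := lemmaP hABA s t hs ht hypF m h1 h2
    obtain ⟨Y', hY', hmY', hsY', htY'⟩ :=
      lemmaP (aba_compl hABA) s t hs ht hypG m h1 h2
    obtain ⟨Y, hYF, rfl⟩ := hY'
    simp only [Set.mem_compl_iff, not_not] at hmY' hsY' htY'
    exact hABA ⟨Y, hYF, X, hXF, s, m, t, h1, h2, hsY', hsX, htY', htX, hmX, hmY'⟩
  obtain ⟨m, hsm, hmt, hmM⟩ := hkey
  have hsub : ({s, m, t} : Set α) ⊆ M := by
    intro x hx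
    rcases hx with rfl | rfl | rfl
    · exact hsM
    · exact hmM
    · exact htM
  have hcard3 : ({s, m, t} : Set α).ncard = 3 := by
    rw [Set.ncard_insert_of_notMem (by simp [hsm.ne, (hsm.trans hmt).ne]),
      Set.ncard_pair hmt.ne]
  calc (3 : ℕ) = ({s, m, t} : Set α).ncard := hcard3.symm
    _ ≤ M.ncard := Set.ncard_le_ncard hsub (Set.toFinite M)
end

section
/- In a pseudohalfplane hypergraph on vertex set S, if a hyperedge H contains every extremal vertex, then H = S. -/
namespace PseudoHalfplaneProof

variable {α : Type*} [LinearOrder α]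

/-- The "exclusive parts are separated" relation: every element exclusive to `P`
precedes every element exclusive to `Q`. -/
def Sq (P Q : Set α) : Prop :=
  ∀ p ∈ P, p ∉ Q → ∀ q ∈ Q, q ∉ P → p < q

/-- In an ABA-free family, any two members are comparable under `Sq`. -/
lemma comparable_of_abafree {F : Set (Set α)} (h : ABAFree F) {P Q : Set α}
    (hP : P ∈ F) (hQ : Q ∈ F) : Sq P Q ∨ Sq Q P := by
  by_contra hc
  push_neg at hc
  obtain ⟨h1, h2⟩ := hc
  unfold Sq at h1 h2
  push_neg at h1 h2
  obtain ⟨p₀, hp₀P, hp₀Q, q₀, hq₀Q, hq₀P, h₀⟩ := h1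
  obtain ⟨q₁, hq₁Q, hq₁P, p₁, hp₁P, hp₁Q, h₁⟩ := h2
  -- h₀ : ¬ p₀ < q₀, h₁ : ¬ q₁ < p₁
  have hq₀p₀ : q₀ < p₀ := lt_of_le_of_ne h₀ (fun he => hq₀P (he ▸ hp₀P))
  have hp₁q₁ : p₁ < q₁ := lt_of_le_of_ne h₁ (fun he => hp₁Q (he ▸ hq₁Q))
  rcases lt_or_ge q₀ p₁ with hlt | hle
  · exact h ⟨Q, hQ, P, hP, q₀, p₁, q₁, hlt, hp₁q₁, hq₀Q, hq₀P, hq₁Q, hq₁P, hp₁P, hp₁Q⟩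
  · have hp₁q₀ : p₁ < q₀ := lt_of_le_of_ne hle (fun he => hq₀P (he ▸ hp₁P))
    exact h ⟨P, hP, Q, hQ, p₁, q₀, p₀, hp₁q₀, hq₀p₀, hp₁P, hp₁Q, hp₀P, hp₀Q, hq₀Q, hq₀P⟩

/-- The complement family of an ABA-free family is ABA-free. -/
lemma abafree_compl {F : Set (Set α)} (h : ABAFree F) : ABAFree (compl '' F) := by
  rintro ⟨Ac, ⟨A₀, hA₀, rfl⟩, Bc, ⟨B₀, hB₀, rfl⟩, x, y, z, hxy, hyz,
    hxA, hxB, hzA, hzB, hyB, hyA⟩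
  -- x, z ∈ B₀ \ A₀ and y ∈ A₀ \ B₀
  have hxA' : x ∉ A₀ := hxA
  have hxB' : x ∈ B₀ := not_not.mp hxB
  have hzA' : z ∉ A₀ := hzA
  have hzB' : z ∈ B₀ := not_not.mp hzB
  have hyB' : y ∉ B₀ := hyB
  have hyA' : y ∈ A₀ := not_not.mp hyA
  exact h ⟨B₀, hB₀, A₀, hA₀, x, y, z, hxy, hyz, hxB', hxA', hzB', hzA', hyA', hyB'⟩

/-- Every nonempty hyperedge of an ABA-free family on a finite vertex set contains a
vertex skipped by no member of the family (a "topvertex"). -/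
lemma exists_topvertex [Fintype α] {F : Set (Set α)} (h : ABAFree F) {A : Set α}
    (hA : A ∈ F) (hne : A.Nonempty) : ∃ v ∈ A, ∀ G ∈ F, ¬ Skips G v := by
  classical
  set Good : α → Prop := fun v => v ∈ A ∧ ∀ C ∈ F, Skips C v → Sq C A with hGoodDef
  -- the minimum of A is Good
  obtain ⟨v₀, hv₀A, hv₀min⟩ := Set.exists_min_image A (fun a => a) A.toFinite hne
  have hGood₀ : Good v₀ := by
    refine ⟨hv₀A, ?_⟩
    intro C hC hskip
    rcases comparable_of_abafree h hC hA with h1 | h1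
    · exact h1
    · exfalso
      obtain ⟨hvC, ⟨x, hxC, hxv⟩, -⟩ := hskip
      have hxA : x ∉ A := fun hxA => absurd hxv (not_lt.mpr (hv₀min x hxA))
      exact absurd (h1 v₀ hv₀A hvC x hxC hxA) (not_lt.mpr hxv.le)
  -- take a maximal Good vertex
  obtain ⟨v, hvG, hvmax⟩ :=
    Set.exists_max_image {v | Good v} (fun a => a) (Set.toFinite _) ⟨v₀, hGood₀⟩
  refine ⟨v, hvG.1, ?_⟩
  intro G hG hskip
  have hSqGA : Sq G A := hvG.2 G hG hskip
  obtain ⟨hvnG, ⟨x₀, hx₀G, hx₀v⟩, ⟨z₀, hz₀G, hvz₀⟩⟩ := hskip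
  -- every element of G above v lies in A
  have tail : ∀ w ∈ G, v < w → w ∈ A := by
    intro w hwG hvw
    by_contra hwA
    exact absurd (hSqGA w hwG hwA v hvG.1 hvnG) (not_lt.mpr hvw.le)
  have hTne : (A ∩ G ∩ Set.Ioi v).Nonempty :=
    ⟨z₀, ⟨tail z₀ hz₀G hvz₀, hz₀G⟩, hvz₀⟩
  obtain ⟨v', hv'T, hv'min⟩ :=
    Set.exists_min_image (A ∩ G ∩ Set.Ioi v) (fun a => a) (Set.toFinite _) hTne
  obtain ⟨⟨hv'A, hv'G⟩, hvv'⟩ := hv'T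
  have hvv' : v < v' := hvv'
  -- v' is Good
  have hGoodv' : Good v' := by
    refine ⟨hv'A, ?_⟩
    intro C hC hsk
    by_contra hnSq
    have hSqAC : Sq A C := (comparable_of_abafree h hC hA).resolve_left hnSq
    obtain ⟨hv'C, ⟨xc, hxcC, hxcv'⟩, ⟨zc, hzcC, hv'zc⟩⟩ := hsk
    -- since ¬ Sq C A, C has an element outside A
    have hex : ∃ c ∈ C, c ∉ A := by
      by_contra hCA
      push_neg at hCA
      exact hnSq (fun p hpC hpA q _ _ => absurd (hCA p hpC) hpA)
    obtain ⟨c, hcC, hcA⟩ := hex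
    have hv'c : v' < c := hSqAC v' hv'A hv'C c hcC hcA
    rcases comparable_of_abafree h hC hG with hCG | hGC
    · -- Sq C G : contradiction via c
      have hcG : c ∉ G := fun hcG => hcA (tail c hcG (hvv'.trans hv'c))
      exact absurd (hCG c hcC hcG v' hv'G hv'C) (not_lt.mpr hv'c.le)
    · -- Sq G C
      by_cases hvC : v ∈ C
      · exact absurd (hGC v' hv'G hv'C v hvC hvnG) (not_lt.mpr hvv'.le)
      · have hxcA : xc ∈ A := by
          by_contra hxcA
          exact absurd (hSqAC v' hv'A hv'C xc hxcC hxcA) (not_lt.mpr hxcv'.le)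
        rcases lt_trichotomy xc v with hlt | heq | hgt
        · -- C skips v, so by Goodness of v, Sq C A, contradicting hnSq
          exact hnSq (hvG.2 C hC ⟨hvC, ⟨xc, hxcC, hlt⟩, ⟨zc, hzcC, hvv'.trans hv'zc⟩⟩)
        · exact hvC (heq ▸ hxcC)
        · have hxcG : xc ∈ G := by
            by_contra hxcG
            exact absurd (hGC v' hv'G hv'C xc hxcC hxcG) (not_lt.mpr hxcv'.le)
          exact absurd (hv'min xc ⟨⟨hxcA, hxcG⟩, hgt⟩) (not_le.mpr hxcv')
  exact absurd (hvmax v' hGoodv') (not_le.mpr hvv')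

end PseudoHalfplaneProof

/-- If a hyperedge of a pseudohalfplane hypergraph contains every extremal vertex,
then it contains every vertex. -/
theorem hyperedge_containing_all_extremal {α : Type*} [LinearOrder α] [Fintype α]
    (F : Set (Set α)) (hABA : ABAFree F)
    (H : Set (Set α)) (hH : H ⊆ F ∪ compl '' F)
    (A : Set α) (hA : A ∈ H)
    (hall : ∀ a : α, (Unskippable F a ∨ Unskippable (compl '' F) a) → a ∈ A) :
    A = Set.univ := by
  classical
  by_contra hne
  have hb : ∃ b, b ∉ A := by
    by_contra h'
    push_neg at h'
    exact hne (Set.eq_univ_of_forall h')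
  obtain ⟨b, hb⟩ := hb
  rcases hH hA with hAF | hAc
  · -- A ∈ F : use the complement family, whose hyperedge Aᶜ is nonempty
    have h1 : ABAFree (compl '' F) := PseudoHalfplaneProof.abafree_compl hABA
    have h2 : Aᶜ ∈ compl '' F := ⟨A, hAF, rfl⟩
    obtain ⟨v, hv, htop⟩ := PseudoHalfplaneProof.exists_topvertex h1 h2 ⟨b, hb⟩
    exact hv (hall v (Or.inr htop))
  · -- A is the complement of some D ∈ F
    obtain ⟨D, hD, rfl⟩ := hAc
    have hbD : b ∈ D := not_not.mp hb
    obtain ⟨v, hv, htop⟩ := PseudoHalfplaneProof.exists_topvertex hABA hD ⟨b, hbD⟩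
    exact (hall v (Or.inl htop)) hv
end

section
/- For a pseudohalfplane hypergraph H on vertex set S, the convex hull of the set E(H) of extremal vertices equals S, i.e., every hyperedge of H containing all extremal vertices contains all of S, so Conv(E(H)) = S. -/
/-- The convex hull of `X` in the hypergraph `H`: the intersection of all hyperedges
containing `X` (the empty intersection being the whole vertex set). -/
def Conv {α : Type*} [LinearOrder α] (H : Set (Set α)) (X : Set α) : Set α :=
  ⋂₀ {A | A ∈ H ∧ X ⊆ A}

/-- Relativized unskippability: no member of `F` skips `a` using witnesses inside `V`. -/
def USk {α : Type*} [LinearOrder α] (V : Finset α) (F : Set (Set α)) (a : α) : Prop :=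
  ∀ B ∈ F, ¬ (a ∉ B ∧ (∃ x ∈ B, x ∈ V ∧ x < a) ∧ (∃ z ∈ B, z ∈ V ∧ a < z))

/-- Main combinatorial lemma (relativized): every edge of an ABA-free family that meets a
finite ground set `V` contains a vertex of `V` that is unskippable with witnesses in `V`. -/
lemma mainAux {α : Type*} [LinearOrder α] :
    ∀ n : ℕ, ∀ V : Finset α, V.card ≤ n → ∀ F : Set (Set α), ABAFree F →
    ∀ G ∈ F, ∀ x0 : α, x0 ∈ V → x0 ∈ G →
    ∃ t, t ∈ V ∧ t ∈ G ∧ USk V F t := by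
  intro n
  induction n with
  | zero =>
    intro V hV F _ G _ x0 hx0V _
    rw [Nat.le_zero, Finset.card_eq_zero] at hV
    subst hV
    exact absurd hx0V (Finset.notMem_empty x0)
  | succ n ih =>
    intro V hV F hABA G hG x0 hx0V hx0G
    have hne : V.Nonempty := ⟨x0, hx0V⟩
    set m := V.min' hne with hm
    by_cases hmG : m ∈ G
    · refine ⟨m, V.min'_mem hne, hmG, fun B _ h => ?_⟩
      obtain ⟨_, ⟨x, _, hxV, hxm⟩, _⟩ := h
      exact absurd (V.min'_le x hxV) (not_le.mpr hxm)
    · set V' := V.erase m with hV'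
      have hV'card : V'.card ≤ n := by
        have h1 : (V.erase m).card = V.card - 1 := Finset.card_erase_of_mem (V.min'_mem hne)
        have h2 : 1 ≤ V.card := Finset.card_pos.mpr hne
        rw [hV', h1]
        omega
      have hV'sub : V' ⊆ V := Finset.erase_subset _ _
      -- key step: a vertex of G unskippable in V' that is skipped in V yields a strictly
      -- larger vertex of G unskippable in V'
      have step : ∀ g : α, g ∈ V' → g ∈ G → USk V' F g → ¬ USk V F g →
          ∃ g₂, g₂ ∈ V' ∧ g₂ ∈ G ∧ USk V' F g₂ ∧ g < g₂ := by
        intro g hgV' hgG hgU' hgU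
        rw [USk] at hgU
        push_neg at hgU
        obtain ⟨E, hE, hgE, ⟨x, hxE, hxV, hxg⟩, ⟨z, hzE, hzV, hgz⟩⟩ := hgU
        have hmg : m < g := by
          have h1 : m ≤ g := V.min'_le g (hV'sub hgV')
          have h2 : g ≠ m := Finset.ne_of_mem_erase hgV'
          exact lt_of_le_of_ne h1 (Ne.symm h2)
        have hzV' : z ∈ V' := Finset.mem_erase.mpr ⟨ne_of_gt (lt_trans hmg hgz), hzV⟩
        -- no lower witness in V'
        have hnolow : ∀ y, y ∈ E → y ∈ V' → ¬ y < g := by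
          intro y hyE hyV' hylt
          exact hgU' E hE ⟨hgE, ⟨y, hyE, hyV', hylt⟩, ⟨z, hzE, hzV', hgz⟩⟩
        -- hence the lower witness x must be m
        have hxm : x = m := by
          by_contra hne'
          exact hnolow x hxE (Finset.mem_erase.mpr ⟨hne', hxV⟩) hxg
        have hmE : m ∈ E := hxm ▸ hxE
        -- ABA-freeness: everything of E above g lies in G
        have hupG : ∀ w, w ∈ E → g < w → w ∈ G := by
          intro w hwE hgw
          by_contra hwG
          exact hABA ⟨E, hE, G, hG, m, g, w, hmg, hgw, hmE, hmG, hwE, hwG, hgG, hgE⟩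
        -- apply the induction hypothesis to the edge E on the smaller ground set V'
        obtain ⟨g₂, hg₂V', hg₂E, hg₂U'⟩ := ih V' hV'card F hABA E hE z hzV' hzE
        have hgg₂ : g < g₂ := by
          rcases lt_trichotomy g g₂ with h | h | h
          · exact h
          · exact absurd (h ▸ hg₂E) hgE
          · exact (hnolow g₂ hg₂E hg₂V' h).elim
        exact ⟨g₂, hg₂V', hupG g₂ hg₂E hgg₂, hg₂U', hgg₂⟩
      -- ascend: iterate `step` until we find a vertex unskippable in V
      have ascend : ∀ k : ℕ, ∀ g : α, (V'.filter (fun x => g < x)).card ≤ k →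
          g ∈ V' → g ∈ G → USk V' F g → ∃ t, t ∈ V ∧ t ∈ G ∧ USk V F t := by
        intro k
        induction k with
        | zero =>
          intro g hcard hgV' hgG hgU'
          by_cases hU : USk V F g
          · exact ⟨g, hV'sub hgV', hgG, hU⟩
          · obtain ⟨g₂, hg₂V', _, _, hgg₂⟩ := step g hgV' hgG hgU' hU
            have : g₂ ∈ V'.filter (fun x => g < x) := Finset.mem_filter.mpr ⟨hg₂V', hgg₂⟩
            have := Finset.card_pos.mpr ⟨g₂, this⟩
            omega
        | succ k ihk =>
          intro g hcard hgV' hgG hgU'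
          by_cases hU : USk V F g
          · exact ⟨g, hV'sub hgV', hgG, hU⟩
          · obtain ⟨g₂, hg₂V', hg₂G, hg₂U', hgg₂⟩ := step g hgV' hgG hgU' hU
            have hsub : V'.filter (fun x => g₂ < x) ⊂ V'.filter (fun x => g < x) := by
              refine Finset.ssubset_iff_of_subset ?_ |>.mpr ?_
              · intro y hy
                obtain ⟨hyV', hy2⟩ := Finset.mem_filter.mp hy
                exact Finset.mem_filter.mpr ⟨hyV', lt_trans hgg₂ hy2⟩
              · exact ⟨g₂, Finset.mem_filter.mpr ⟨hg₂V', hgg₂⟩,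
                  fun hc => absurd (Finset.mem_filter.mp hc).2 (lt_irrefl g₂)⟩
            have := Finset.card_lt_card hsub
            exact ihk g₂ (by omega) hg₂V' hg₂G hg₂U'
      -- start the ascent from the vertex given by the induction hypothesis for G on V'
      have hx0V' : x0 ∈ V' := Finset.mem_erase.mpr ⟨fun h => hmG (h ▸ hx0G), hx0V⟩
      obtain ⟨t₀, ht₀V', ht₀G, ht₀U'⟩ := ih V' hV'card F hABA G hG x0 hx0V' hx0G
      exact ascend _ t₀ le_rfl ht₀V' ht₀G ht₀U'

/-- Every nonempty edge of an ABA-free family on a finite vertex set contains an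
unskippable vertex. -/
lemma exists_unskippable_mem {α : Type*} [LinearOrder α] [Fintype α]
    {F : Set (Set α)} (hABA : ABAFree F) {G : Set α} (hG : G ∈ F)
    {x0 : α} (hx0 : x0 ∈ G) : ∃ t ∈ G, Unskippable F t := by
  obtain ⟨t, _, htG, htU⟩ :=
    mainAux (Finset.univ (α := α)).card Finset.univ le_rfl F hABA G hG x0
      (Finset.mem_univ x0) hx0
  refine ⟨t, htG, fun B hB hskip => ?_⟩
  obtain ⟨htB, ⟨x, hxB, hxt⟩, ⟨z, hzB, htz⟩⟩ := hskip
  exact htU B hB ⟨htB, ⟨x, hxB, Finset.mem_univ x, hxt⟩, ⟨z, hzB, Finset.mem_univ z, htz⟩⟩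

/-- The family of complements of an ABA-free family is ABA-free. -/
lemma abaFree_compl {α : Type*} [LinearOrder α] {F : Set (Set α)} (hABA : ABAFree F) :
    ABAFree (compl '' F) := by
  rintro ⟨A', hA', B', hB', x, y, z, hxy, hyz, hxA, hxB, hzA, hzB, hyB, hyA⟩
  obtain ⟨A, hA, rfl⟩ := hA'
  obtain ⟨B, hB, rfl⟩ := hB'
  simp only [Set.mem_compl_iff, not_not] at hxA hxB hzA hzB hyB hyA
  exact hABA ⟨B, hB, A, hA, x, y, z, hxy, hyz, hxB, hxA, hzB, hzA, hyA, hyB⟩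

/-- The convex hull of the set of extremal vertices of a pseudohalfplane hypergraph
is the entire vertex set. -/
theorem conv_of_extremal_eq_univ {α : Type*} [LinearOrder α] [Fintype α]
    (F : Set (Set α)) (hABA : ABAFree F)
    (H : Set (Set α)) (hH : H ⊆ F ∪ compl '' F) :
    Conv H {a : α | Unskippable F a ∨ Unskippable (compl '' F) a} = Set.univ := by
  apply Set.eq_univ_of_forall
  intro a
  rw [Conv, Set.mem_sInter]
  rintro A ⟨hAH, hAE⟩
  rcases hH hAH with hAF | ⟨C, hCF, rfl⟩
  · -- A ∈ F : if a ∉ A, then Aᶜ is a nonempty edge of the complement family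
    by_contra haA
    have hAc : Aᶜ ∈ compl '' F := ⟨A, hAF, rfl⟩
    obtain ⟨t, htAc, htU⟩ :=
      exists_unskippable_mem (abaFree_compl hABA) hAc (x0 := a) haA
    exact htAc (hAE (Or.inr htU))
  · -- A = Cᶜ with C ∈ F : if a ∉ Cᶜ then C is a nonempty edge of F
    by_contra haA
    have haC : a ∈ C := not_not.mp haA
    obtain ⟨t, htC, htU⟩ := exists_unskippable_mem hABA hCF haC
    exact (hAE (Or.inl htU) : t ∈ Cᶜ) htC
end

section
/- Given a pseudohalfplane hypergraph H on vertex set S and any subset S' ⊆ S, the convex hull of S' equals the convex hull of the extremal vertices of the induced subhypergraph on S': Conv(E(H[S'])) = Conv(S'). -/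
/-- Complementing every member of a family preserves ABA-freeness. -/
lemma abafree_compl {α : Type*} [LinearOrder α] {F : Set (Set α)} (h : ABAFree F) :
    ABAFree (compl '' F) := by
  rintro ⟨A', ⟨A, hA, rfl⟩, B', ⟨B, hB, rfl⟩, x, y, z, h1, h2, hxA, hxB, hzA, hzB, hyB, hyA⟩
  simp only [Set.mem_compl_iff, not_not] at hxA hxB hzA hzB hyB hyA
  exact h ⟨B, hB, A, hA, x, y, z, h1, h2, hxB, hxA, hzB, hzA, hyA, hyB⟩

/-- Main lemma: if `A` is a member of an ABA-free family `F` and every point of a finite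
set `W` outside `A` is "skipped from below" (belongs to some `C ∈ F` having `W`-points
outside `C` on both sides), then in fact `W ⊆ A`. -/
lemma aba_main {α : Type*} [LinearOrder α] (F : Set (Set α)) (hABA : ABAFree F)
    (A : Set α) (hA : A ∈ F) :
    ∀ n : ℕ, ∀ W : Set α, W.Finite → W.ncard ≤ n →
      (∀ b ∈ W, b ∉ A →
        ∃ C ∈ F, b ∈ C ∧ (∃ x ∈ W, x ∉ C ∧ x < b) ∧ (∃ z ∈ W, z ∉ C ∧ b < z)) →
      W ⊆ A := by
  intro n
  induction n with
  | zero =>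
    intro W hWfin hcard _
    have : W = ∅ := by
      have := (Set.ncard_eq_zero hWfin).mp (Nat.le_zero.mp hcard)
      exact this
    simp [this]
  | succ n ih =>
    intro W hWfin hcard hskip
    by_contra hsub
    rw [Set.subset_def] at hsub
    push_neg at hsub
    obtain ⟨b1, hb1W, hb1A⟩ := hsub
    -- the set of points of W outside A
    have hTfin : {t | t ∈ W ∧ t ∉ A}.Finite := hWfin.subset (fun t ht => ht.1)
    obtain ⟨b0, hb0T, hb0min⟩ :=
      Set.exists_min_image {t | t ∈ W ∧ t ∉ A} id hTfin ⟨b1, hb1W, hb1A⟩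
    obtain ⟨hb0W, hb0A⟩ := hb0T
    obtain ⟨C, hC, hb0C, ⟨x, hxW, hxC, hxlt⟩, ⟨z0, hz0W, hz0C, hz0gt⟩⟩ :=
      hskip b0 hb0W hb0A
    -- maximal right witness of b0
    have hZfin : {w | w ∈ W ∧ w ∉ C ∧ b0 < w}.Finite := hWfin.subset (fun w hw => hw.1)
    obtain ⟨z, hzZ, hzmax⟩ :=
      Set.exists_max_image {w | w ∈ W ∧ w ∉ C ∧ b0 < w} id hZfin ⟨z0, hz0W, hz0C, hz0gt⟩
    obtain ⟨hzW, hzC, hb0z⟩ := hzZ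
    -- every point of W \ {b0} outside A is still skipped within W \ {b0}
    have hstep : ∀ t ∈ W \ {b0}, t ∉ A →
        ∃ C' ∈ F, t ∈ C' ∧ (∃ x' ∈ W \ {b0}, x' ∉ C' ∧ x' < t) ∧
          (∃ z' ∈ W \ {b0}, z' ∉ C' ∧ t < z') := by
      rintro t ⟨htW, htne⟩ htA
      have htne' : t ≠ b0 := htne
      have hb0t : b0 < t :=
        lt_of_le_of_ne (hb0min t ⟨htW, htA⟩) (Ne.symm htne')
      obtain ⟨Ct, hCt, htCt, ⟨xt, hxtW, hxtCt, hxtlt⟩, ⟨zt, hztW, hztCt, hztgt⟩⟩ :=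
        hskip t htW htA
      have hztne : zt ≠ b0 := ne_of_gt (lt_trans hb0t hztgt)
      by_cases hL : ∃ x' ∈ W, x' ∉ Ct ∧ x' < t ∧ x' ≠ b0
      · obtain ⟨x', hx'W, hx'Ct, hx'lt, hx'ne⟩ := hL
        exact ⟨Ct, hCt, htCt, ⟨x', ⟨hx'W, hx'ne⟩, hx'Ct, hx'lt⟩,
          ⟨zt, ⟨hztW, hztne⟩, hztCt, hztgt⟩⟩
      · push_neg at hL
        -- all left witnesses of t equal b0
        have hb0Ct : b0 ∉ Ct := by
          have hxt := hL xt hxtW hxtCt hxtlt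
          rwa [hxt] at hxtCt
        have hxCt : x ∈ Ct := by
          by_contra h
          exact (ne_of_lt hxlt) (hL x hxW h (lt_trans hxlt hb0t))
        by_cases htC : t ∈ C
        · by_cases htz : t < z
          · exact ⟨C, hC, htC,
              ⟨x, ⟨hxW, ne_of_lt hxlt⟩, hxC, lt_trans hxlt hb0t⟩,
              ⟨z, ⟨hzW, ne_of_gt hb0z⟩, hzC, htz⟩⟩
          · have hzt : z < t := lt_of_le_of_ne (not_lt.mp htz)
              (fun h => (h ▸ hzC) htC)
            have hzCt : z ∈ Ct := by
              by_contra h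
              exact (ne_of_gt hb0z) (hL z hzW h hzt)
            have hztC : zt ∈ C := by
              by_contra h
              exact absurd (hzmax zt ⟨hztW, h, lt_trans hb0t hztgt⟩)
                (not_le.mpr (lt_trans hzt hztgt))
            exact absurd ⟨C, hC, Ct, hCt, b0, z, zt, hb0z, lt_trans hzt hztgt,
              hb0C, hb0Ct, hztC, hztCt, hzCt, hzC⟩ hABA
        · exact absurd ⟨Ct, hCt, C, hC, x, b0, t, hxlt, hb0t,
            hxCt, hxC, htCt, htC, hb0C, hb0Ct⟩ hABA
    -- apply induction hypothesis to W \ {b0}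
    have hW'fin : (W \ {b0}).Finite := hWfin.subset Set.diff_subset
    have hW'card : (W \ {b0}).ncard ≤ n := by
      have := Set.ncard_diff_singleton_lt_of_mem hb0W hWfin
      omega
    have hW' := ih (W \ {b0}) hW'fin hW'card hstep
    have hxA : x ∈ A := hW' ⟨hxW, ne_of_lt hxlt⟩
    have hzA : z ∈ A := hW' ⟨hzW, ne_of_gt hb0z⟩
    exact absurd ⟨A, hA, C, hC, x, b0, z, hxlt, hb0z,
      hxA, hxC, hzA, hzC, hb0C, hb0A⟩ hABA

/-- Krein–Milman for pseudoconvex sets: the convex hull of any subset `S'` equals the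
convex hull of the extremal vertices of the induced subhypergraph on `S'`. -/
theorem conv_extremal_induced {α : Type*} [LinearOrder α] [Fintype α]
    (F : Set (Set α)) (hABA : ABAFree F)
    (H : Set (Set α)) (hH : H ⊆ F ∪ compl '' F)
    (S' : Set α) :
    Conv H {a | a ∈ S' ∧ (Unskippable ((fun A => A ∩ S') '' F) a ∨
                          Unskippable ((fun A => S' \ A) '' F) a)}
      = Conv H S' := by
  set E : Set α := {a | a ∈ S' ∧ (Unskippable ((fun A => A ∩ S') '' F) a ∨
                          Unskippable ((fun A => S' \ A) '' F) a)} with hE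
  have hES : E ⊆ S' := fun a ha => ha.1
  -- extract the two skippers for a non-extremal point
  have hnE : ∀ b ∈ S', b ∉ E →
      (∃ B ∈ F, Skips (B ∩ S') b) ∧ (∃ C ∈ F, Skips (S' \ C) b) := by
    intro b hbS hbE
    have h1 : ¬ (Unskippable ((fun A => A ∩ S') '' F) b ∨
        Unskippable ((fun A => S' \ A) '' F) b) := fun h => hbE ⟨hbS, h⟩
    rw [not_or] at h1
    obtain ⟨hn1, hn2⟩ := h1
    constructor
    · simp only [Unskippable, not_forall, not_not] at hn1
      obtain ⟨G, hG, hsk⟩ := hn1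
      obtain ⟨B, hB, rfl⟩ := hG
      exact ⟨B, hB, hsk⟩
    · simp only [Unskippable, not_forall, not_not] at hn2
      obtain ⟨G, hG, hsk⟩ := hn2
      obtain ⟨C, hC, rfl⟩ := hG
      exact ⟨C, hC, hsk⟩
  have key : ∀ X ∈ H, E ⊆ X → S' ⊆ X := by
    intro X hXH hEX
    rcases hH hXH with hXF | ⟨D, hD, rfl⟩
    · -- X ∈ F : use bottom skippers
      refine aba_main F hABA X hXF S'.ncard S' S'.toFinite le_rfl ?_
      intro b hbS hbX
      have hbE : b ∉ E := fun h => hbX (hEX h)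
      obtain ⟨_, C, hC, hsk⟩ := hnE b hbS hbE
      obtain ⟨hbG, ⟨x, hxG, hxlt⟩, ⟨z, hzG, hzgt⟩⟩ := hsk
      have hbC : b ∈ C := by
        by_contra h
        exact hbG ⟨hbS, h⟩
      exact ⟨C, hC, hbC, ⟨x, hxG.1, hxG.2, hxlt⟩, ⟨z, hzG.1, hzG.2, hzgt⟩⟩
    · -- X = Dᶜ : use top skippers, in the complemented family
      refine aba_main (compl '' F) (abafree_compl hABA) Dᶜ ⟨D, hD, rfl⟩
        S'.ncard S' S'.toFinite le_rfl ?_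
      intro b hbS hbX
      have hbE : b ∉ E := fun h => hbX (hEX h)
      obtain ⟨⟨B, hB, hsk⟩, _⟩ := hnE b hbS hbE
      obtain ⟨hbG, ⟨x, hxG, hxlt⟩, ⟨z, hzG, hzgt⟩⟩ := hsk
      have hbB : b ∉ B := fun h => hbG ⟨h, hbS⟩
      refine ⟨Bᶜ, ⟨B, hB, rfl⟩, hbB, ⟨x, hxG.2, ?_, hxlt⟩, ⟨z, hzG.2, ?_, hzgt⟩⟩
      · simp only [Set.mem_compl_iff, not_not]; exact hxG.1
      · simp only [Set.mem_compl_iff, not_not]; exact hzG.1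
  have hsets : {X | X ∈ H ∧ E ⊆ X} = {X | X ∈ H ∧ S' ⊆ X} := by
    ext X
    exact ⟨fun ⟨h1, h2⟩ => ⟨h1, key X h1 h2⟩, fun ⟨h1, h2⟩ => ⟨h1, hES.trans h2⟩⟩
  show ⋂₀ {X | X ∈ H ∧ E ⊆ X} = ⋂₀ {X | X ∈ H ∧ S' ⊆ X}
  rw [hsets]
end

section
/- Primal discrete Helly theorem for pseudohalfplanes: if H is a pseudohalfplane hypergraph on a finite ordered vertex set such that every three hyperedges have a common vertex, then H can be extended by a new vertex v (inserted into the vertex order, and each hyperedge extended by deciding whether it contains v) so that the resulting hypergraph is still a pseudohalfplane hypergraph and v is contained in every extended hyperedge. -/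
namespace PDHHelper

variable {α : Type*} [LinearOrder α]

/-- Two sets are separated: all of `C \ D` is before all of `D \ C`, or conversely. -/
def Sep (C D : Set α) : Prop :=
  (∀ s ∈ C \ D, ∀ t ∈ D \ C, s < t) ∨ (∀ s ∈ C \ D, ∀ t ∈ D \ C, t < s)

theorem sep_of_abaFree {F : Set (Set α)} (hF : ABAFree F) {C D : Set α}
    (hC : C ∈ F) (hD : D ∈ F) : Sep C D := by
  by_contra h
  rw [Sep] at h
  push_neg at h
  obtain ⟨⟨s, hs, t, ht, hts⟩, s', hs', t', ht', hst⟩ := h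
  have h1 : t < s := lt_of_le_of_ne hts (fun he => hs.2 (he ▸ ht.1))
  have h2 : s' < t' := lt_of_le_of_ne hst (fun he => hs'.2 (he.symm ▸ ht'.1))
  rcases lt_trichotomy s t' with hc | hc | hc
  · exact hF ⟨D, hD, C, hC, t, s, t', h1, hc, ht.1, ht.2, ht'.1, ht'.2, hs.1, hs.2⟩
  · exact hs.2 (hc ▸ ht'.1)
  · exact hF ⟨C, hC, D, hD, s', t', s, h2, hc, hs'.1, hs'.2, hs.1, hs.2, ht'.1, ht'.2⟩

/-- `Ok p C D` : it is consistent to place the new vertex (just above cut `p`)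
inside `C` but outside `D`. -/
def Ok (p : WithBot α) (C D : Set α) : Prop :=
  (∀ t ∈ D \ C, p < (t : WithBot α) ∧ ∀ s ∈ C \ D, s < t) ∨
  (∀ t ∈ D \ C, (t : WithBot α) ≤ p ∧ ∀ s ∈ C \ D, t < s)

theorem not_ok_elim {p : WithBot α} {C D : Set α} (sep : Sep C D) (h : ¬ Ok p C D) :
    ((∀ s ∈ C \ D, ∀ t ∈ D \ C, s < t) ∧ (∃ a ∈ D \ C, (a : WithBot α) ≤ p) ∧
      ((∃ b ∈ D \ C, p < (b : WithBot α)) ∨ (C \ D).Nonempty)) ∨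
    ((∀ s ∈ C \ D, ∀ t ∈ D \ C, t < s) ∧ (∃ b ∈ D \ C, p < (b : WithBot α)) ∧
      ((∃ a ∈ D \ C, (a : WithBot α) ≤ p) ∨ (C \ D).Nonempty)) := by
  rw [Ok] at h
  push_neg at h
  obtain ⟨h1, h2⟩ := h
  rcases sep with hdir | hdir
  · left
    refine ⟨hdir, ?_, ?_⟩
    · obtain ⟨a, ha, hcon⟩ := h1
      rcases imp_iff_not_or.mp hcon with hle | ⟨s, hs, hns⟩
      · exact ⟨a, ha, not_lt.mp hle⟩
      · exact absurd (hdir s hs a ha) (not_lt.mpr hns)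
    · obtain ⟨b, hb, hcon⟩ := h2
      rcases imp_iff_not_or.mp hcon with hle | ⟨s, hs, _⟩
      · exact Or.inl ⟨b, hb, not_le.mp hle⟩
      · exact Or.inr ⟨s, hs⟩
  · right
    refine ⟨hdir, ?_, ?_⟩
    · obtain ⟨b, hb, hcon⟩ := h2
      rcases imp_iff_not_or.mp hcon with hle | ⟨s, hs, hns⟩
      · exact ⟨b, hb, not_le.mp hle⟩
      · exact absurd (hdir s hs b hb) (not_lt.mpr hns)
    · obtain ⟨a, ha, hcon⟩ := h1
      rcases imp_iff_not_or.mp hcon with hle | ⟨s, hs, _⟩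
      · exact Or.inl ⟨a, ha, not_lt.mp hle⟩
      · exact Or.inr ⟨s, hs⟩

theorem coe_lt_coe_of_le_of_lt {p : WithBot α} {a b : α}
    (h1 : (a : WithBot α) ≤ p) (h2 : p < (b : WithBot α)) : a < b :=
  WithBot.coe_lt_coe.mp (lt_of_le_of_lt h1 h2)

theorem ok_trans {p : WithBot α} {C D E : Set α} (sCD : Sep C D) (sDE : Sep D E)
    (h1 : ¬ Ok p C D) (h2 : ¬ Ok p D E) : ¬ Ok p C E := by
  intro hOk
  rcases not_ok_elim sCD h1 with ⟨sep1, ⟨a1, ha1, ha1p⟩, ex1⟩ | ⟨sep1, ⟨b1, hb1, hb1p⟩, ex1⟩ <;>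
    rcases not_ok_elim sDE h2 with ⟨sep2, ⟨a2, ha2, ha2p⟩, ex2⟩ | ⟨sep2, ⟨b2, hb2, hb2p⟩, ex2⟩ <;>
    rcases hOk with hD1 | hD2
  -- Case A1, A2, D1
  · by_cases ha2C : a2 ∈ C
    · have haa : a2 < a1 := sep1 a2 ⟨ha2C, ha2.2⟩ a1 ha1
      by_cases ha1E : a1 ∈ E
      · exact absurd (hD1 a1 ⟨ha1E, ha1.2⟩).1 (not_lt.mpr ha1p)
      · exact absurd (sep2 a1 ⟨ha1.1, ha1E⟩ a2 ha2) (not_lt.mpr haa.le)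
    · exact absurd (hD1 a2 ⟨ha2.1, ha2C⟩).1 (not_lt.mpr ha2p)
  -- Case A1, A2, D2
  · rcases ex1 with ⟨b1, hb1, hb1p⟩ | ⟨s1, hs1⟩
    · by_cases hb1E : b1 ∈ E
      · exact absurd (hD2 b1 ⟨hb1E, hb1.2⟩).1 (not_le.mpr hb1p)
      · exact absurd (sep2 b1 ⟨hb1.1, hb1E⟩ a2 ha2)
          (not_lt.mpr (coe_lt_coe_of_le_of_lt ha2p hb1p).le)
    · rcases ex2 with ⟨b2, hb2, hb2p⟩ | ⟨s2, hs2⟩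
      · by_cases hb2C : b2 ∈ C
        · exact absurd (sep1 b2 ⟨hb2C, hb2.2⟩ a1 ha1)
            (not_lt.mpr (coe_lt_coe_of_le_of_lt ha1p hb2p).le)
        · exact absurd (hD2 b2 ⟨hb2.1, hb2C⟩).1 (not_le.mpr hb2p)
      · -- pure order leaf, mirrored
        by_cases hs1E : s1 ∈ E
        · have h21 : s2 < s1 := sep2 s2 hs2 s1 ⟨hs1E, hs1.2⟩
          by_cases hs2C : s2 ∈ C
          · by_cases ha1E : a1 ∈ E
            · have c1 : a1 < s2 := (hD2 a1 ⟨ha1E, ha1.2⟩).2 s2 ⟨hs2C, hs2.2⟩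
              have c2 : s1 < a1 := sep1 s1 hs1 a1 ha1
              exact absurd (c2.trans (c1.trans h21)) (lt_irrefl _)
            · by_cases ha2C : a2 ∈ C
              · have c1 : a2 < a1 := sep1 a2 ⟨ha2C, ha2.2⟩ a1 ha1
                have c2 : a1 < a2 := sep2 a1 ⟨ha1.1, ha1E⟩ a2 ha2
                exact absurd (c1.trans c2) (lt_irrefl _)
              · have c1 : a2 < s2 := (hD2 a2 ⟨ha2.1, ha2C⟩).2 s2 ⟨hs2C, hs2.2⟩
                have c2 : s2 < a2 := sep2 s2 hs2 a2 ha2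
                exact absurd (c1.trans c2) (lt_irrefl _)
          · have c1 : s1 < s2 := sep1 s1 hs1 s2 ⟨hs2.1, hs2C⟩
            exact absurd (c1.trans h21) (lt_irrefl _)
        · by_cases ha2C : a2 ∈ C
          · have haa : a2 < a1 := sep1 a2 ⟨ha2C, ha2.2⟩ a1 ha1
            by_cases ha1E : a1 ∈ E
            · have c1 : a1 < s1 := (hD2 a1 ⟨ha1E, ha1.2⟩).2 s1 ⟨hs1.1, hs1E⟩
              by_cases hs2C : s2 ∈ C
              · have c2 : a1 < s2 := (hD2 a1 ⟨ha1E, ha1.2⟩).2 s2 ⟨hs2C, hs2.2⟩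
                have c3 : s2 < a2 := sep2 s2 hs2 a2 ha2
                exact absurd ((c2.trans c3).trans haa) (lt_irrefl _)
              · have c2 : s1 < s2 := sep1 s1 hs1 s2 ⟨hs2.1, hs2C⟩
                have c3 : s2 < a2 := sep2 s2 hs2 a2 ha2
                exact absurd (((c1.trans c2).trans c3).trans haa) (lt_irrefl _)
            · have c1 : a1 < a2 := sep2 a1 ⟨ha1.1, ha1E⟩ a2 ha2
              exact absurd (c1.trans haa) (lt_irrefl _)
          · have c1 : a2 < s1 := (hD2 a2 ⟨ha2.1, ha2C⟩).2 s1 ⟨hs1.1, hs1E⟩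
            have c2 : s2 < a2 := sep2 s2 hs2 a2 ha2
            by_cases hs2C : s2 ∈ C
            · have c3 : a2 < s2 := (hD2 a2 ⟨ha2.1, ha2C⟩).2 s2 ⟨hs2C, hs2.2⟩
              exact absurd (c3.trans c2) (lt_irrefl _)
            · have c3 : s1 < s2 := sep1 s1 hs1 s2 ⟨hs2.1, hs2C⟩
              exact absurd ((c1.trans c3).trans c2) (lt_irrefl _)
  -- Case A1, B2, D1
  · by_cases ha1E : a1 ∈ E
    · exact absurd (hD1 a1 ⟨ha1E, ha1.2⟩).1 (not_lt.mpr ha1p)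
    · exact absurd (sep2 a1 ⟨ha1.1, ha1E⟩ b2 hb2)
        (not_lt.mpr (coe_lt_coe_of_le_of_lt ha1p hb2p).le)
  -- Case A1, B2, D2
  · by_cases hb2C : b2 ∈ C
    · exact absurd (sep1 b2 ⟨hb2C, hb2.2⟩ a1 ha1)
        (not_lt.mpr (coe_lt_coe_of_le_of_lt ha1p hb2p).le)
    · exact absurd (hD2 b2 ⟨hb2.1, hb2C⟩).1 (not_le.mpr hb2p)
  -- Case B1, A2, D1
  · by_cases ha2C : a2 ∈ C
    · exact absurd (sep1 a2 ⟨ha2C, ha2.2⟩ b1 hb1)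
        (not_lt.mpr (coe_lt_coe_of_le_of_lt ha2p hb1p).le)
    · exact absurd (hD1 a2 ⟨ha2.1, ha2C⟩).1 (not_lt.mpr ha2p)
  -- Case B1, A2, D2
  · by_cases hb1E : b1 ∈ E
    · exact absurd (hD2 b1 ⟨hb1E, hb1.2⟩).1 (not_le.mpr hb1p)
    · exact absurd (sep2 b1 ⟨hb1.1, hb1E⟩ a2 ha2)
        (not_lt.mpr (coe_lt_coe_of_le_of_lt ha2p hb1p).le)
  -- Case B1, B2, D1
  · rcases ex1 with ⟨a1, ha1, ha1p⟩ | ⟨s1, hs1⟩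
    · by_cases ha1E : a1 ∈ E
      · exact absurd (hD1 a1 ⟨ha1E, ha1.2⟩).1 (not_lt.mpr ha1p)
      · exact absurd (sep2 a1 ⟨ha1.1, ha1E⟩ b2 hb2)
          (not_lt.mpr (coe_lt_coe_of_le_of_lt ha1p hb2p).le)
    · rcases ex2 with ⟨a2, ha2, ha2p⟩ | ⟨s2, hs2⟩
      · by_cases ha2C : a2 ∈ C
        · exact absurd (sep1 a2 ⟨ha2C, ha2.2⟩ b1 hb1)
            (not_lt.mpr (coe_lt_coe_of_le_of_lt ha2p hb1p).le)
        · exact absurd (hD1 a2 ⟨ha2.1, ha2C⟩).1 (not_lt.mpr ha2p)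
      · -- pure order leaf
        by_cases hs1E : s1 ∈ E
        · have h12 : s1 < s2 := sep2 s2 hs2 s1 ⟨hs1E, hs1.2⟩
          by_cases hs2C : s2 ∈ C
          · by_cases hb1E : b1 ∈ E
            · have c1 : s2 < b1 := (hD1 b1 ⟨hb1E, hb1.2⟩).2 s2 ⟨hs2C, hs2.2⟩
              have c2 : b1 < s1 := sep1 s1 hs1 b1 hb1
              exact absurd ((c2.trans h12).trans c1) (lt_irrefl _)
            · by_cases hb2C : b2 ∈ C
              · have c1 : b1 < b2 := sep1 b2 ⟨hb2C, hb2.2⟩ b1 hb1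
                have c2 : b2 < b1 := sep2 b1 ⟨hb1.1, hb1E⟩ b2 hb2
                exact absurd (c1.trans c2) (lt_irrefl _)
              · have c1 : s2 < b2 := (hD1 b2 ⟨hb2.1, hb2C⟩).2 s2 ⟨hs2C, hs2.2⟩
                have c2 : b2 < s2 := sep2 s2 hs2 b2 hb2
                exact absurd (c1.trans c2) (lt_irrefl _)
          · have c1 : s2 < s1 := sep1 s1 hs1 s2 ⟨hs2.1, hs2C⟩
            exact absurd (h12.trans c1) (lt_irrefl _)
        · by_cases hb2C : b2 ∈ C
          · have hbb : b1 < b2 := sep1 b2 ⟨hb2C, hb2.2⟩ b1 hb1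
            by_cases hb1E : b1 ∈ E
            · have c1 : s1 < b1 := (hD1 b1 ⟨hb1E, hb1.2⟩).2 s1 ⟨hs1.1, hs1E⟩
              by_cases hs2C : s2 ∈ C
              · have c2 : s2 < b1 := (hD1 b1 ⟨hb1E, hb1.2⟩).2 s2 ⟨hs2C, hs2.2⟩
                have c3 : b2 < s2 := sep2 s2 hs2 b2 hb2
                exact absurd ((hbb.trans c3).trans c2) (lt_irrefl _)
              · have c2 : s2 < s1 := sep1 s1 hs1 s2 ⟨hs2.1, hs2C⟩
                have c3 : b2 < s2 := sep2 s2 hs2 b2 hb2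
                exact absurd (((hbb.trans c3).trans c2).trans c1) (lt_irrefl _)
            · have c1 : b2 < b1 := sep2 b1 ⟨hb1.1, hb1E⟩ b2 hb2
              exact absurd (hbb.trans c1) (lt_irrefl _)
          · have c1 : s1 < b2 := (hD1 b2 ⟨hb2.1, hb2C⟩).2 s1 ⟨hs1.1, hs1E⟩
            have c2 : b2 < s2 := sep2 s2 hs2 b2 hb2
            by_cases hs2C : s2 ∈ C
            · have c3 : s2 < b2 := (hD1 b2 ⟨hb2.1, hb2C⟩).2 s2 ⟨hs2C, hs2.2⟩
              exact absurd (c2.trans c3) (lt_irrefl _)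
            · have c3 : s2 < s1 := sep1 s1 hs1 s2 ⟨hs2.1, hs2C⟩
              exact absurd ((c2.trans c3).trans c1) (lt_irrefl _)
  -- Case B1, B2, D2
  · by_cases hb2C : b2 ∈ C
    · have hbb : b1 < b2 := sep1 b2 ⟨hb2C, hb2.2⟩ b1 hb1
      by_cases hb1E : b1 ∈ E
      · exact absurd (hD2 b1 ⟨hb1E, hb1.2⟩).1 (not_le.mpr hb1p)
      · exact absurd (sep2 b1 ⟨hb1.1, hb1E⟩ b2 hb2) (not_lt.mpr hbb.le)
    · exact absurd (hD2 b2 ⟨hb2.1, hb2C⟩).1 (not_le.mpr hb2p)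

end PDHHelper
namespace PDHHelper

variable {α : Type*} [LinearOrder α]

/-- Elements that must lie strictly below the new vertex. -/
def LBset (F H : Set (Set α)) : Set α :=
  {t | ∃ A, A ∈ F ∧ A ∈ H ∧ ∃ B, B ∈ F ∧ Bᶜ ∈ H ∧ t ∈ B \ A ∧
    ∀ s ∈ B \ A, ∀ u ∈ A \ B, s < u}

/-- The cut position for the new vertex: just above all elements of `LBset`. -/
noncomputable def cut (F H : Set (Set α)) [Fintype α] : WithBot α :=
  (Set.toFinite (LBset F H)).toFinset.max

theorem cut_le [Fintype α] {F H : Set (Set α)} {t : α} (ht : t ∈ LBset F H) :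
    (t : WithBot α) ≤ cut F H :=
  Finset.le_max ((Set.Finite.mem_toFinset _).mpr ht)

theorem cut_lt [Fintype α] {F H : Set (Set α)} {x : α}
    (hx : ∀ t ∈ LBset F H, t < x) : cut F H < (x : WithBot α) := by
  unfold cut
  rcases hq : (Set.toFinite (LBset F H)).toFinset.max with _ | m
  · exact WithBot.bot_lt_coe x
  · exact WithBot.coe_lt_coe.mpr
      (hx m ((Set.Finite.mem_toFinset _).mp (Finset.mem_of_max hq)))

theorem lb_lt {F H : Set (Set α)} (hABA : ABAFree F)
    (hHelly : ∀ A ∈ H, ∀ B ∈ H, ∀ C ∈ H, (A ∩ B ∩ C).Nonempty)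
    {A B : Set α} (hAF : A ∈ F) (hAH : A ∈ H) (hBF : B ∈ F) (hBH : Bᶜ ∈ H)
    {t : α} (ht : t ∈ B \ A) (hsA : ∀ s ∈ A \ B, s < t) :
    ∀ l ∈ LBset F H, l < t := by
  intro l hl
  obtain ⟨A', hA'F, hA'H, B', hB'F, hB'H, hlB', hdir⟩ := hl
  by_contra hnot
  have htl : t ≤ l := not_lt.mp hnot
  obtain ⟨pp, hpp⟩ := hHelly A hAH A' hA'H Bᶜ hBH
  obtain ⟨q, hq⟩ := hHelly A hAH A' hA'H B'ᶜ hB'H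
  obtain ⟨r, hr⟩ := hHelly A hAH Bᶜ hBH B'ᶜ hB'H
  obtain ⟨r', hr'⟩ := hHelly A' hA'H Bᶜ hBH B'ᶜ hB'H
  by_cases htA' : t ∈ A'
  · by_cases htB' : t ∈ B'
    · exact hABA ⟨A, hAF, B', hB'F, r, t, q,
        hsA r ⟨hr.1.1, hr.1.2⟩, lt_of_le_of_lt htl (hdir l hlB' q ⟨hq.1.2, hq.2⟩),
        hr.1.1, hr.2, hq.1.1, hq.2, htB', ht.2⟩
    · exact absurd (hdir l hlB' t ⟨htA', htB'⟩) (not_lt.mpr htl)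
  · exact hABA ⟨A', hA'F, B, hBF, pp, t, r',
      hsA pp ⟨hpp.1.1, hpp.2⟩, lt_of_le_of_lt htl (hdir l hlB' r' ⟨hr'.1.1, hr'.2⟩),
      hpp.1.2, hpp.2, hr'.1.1, hr'.1.2, ht.1, htA'⟩

theorem okPN [Fintype α] {F H : Set (Set α)} (hABA : ABAFree F)
    (hHelly : ∀ A ∈ H, ∀ B ∈ H, ∀ C ∈ H, (A ∩ B ∩ C).Nonempty)
    {A B : Set α} (hAF : A ∈ F) (hAH : A ∈ H) (hBF : B ∈ F) (hBH : Bᶜ ∈ H) :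
    Ok (cut F H) A B := by
  rcases sep_of_abaFree hABA hAF hBF with hdir | hdir
  · exact Or.inl (fun t ht => ⟨cut_lt (lb_lt hABA hHelly hAF hAH hBF hBH ht
      (fun s hs => hdir s hs t ht)), fun s hs => hdir s hs t ht⟩)
  · exact Or.inr (fun t ht => ⟨cut_le ⟨A, hAF, hAH, B, hBF, hBH, ht,
      fun s hs u hu => hdir u hu s hs⟩, fun s hs => hdir s hs t ht⟩)

/-- Sets forced to contain the new vertex. -/
def Forced [Fintype α] (F H : Set (Set α)) (X : Set α) : Prop :=
  ∃ A, A ∈ F ∧ A ∈ H ∧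
    Relation.ReflTransGen (fun X Y => X ∈ F ∧ Y ∈ F ∧ ¬ Ok (cut F H) X Y) A X

theorem forced_of_mem [Fintype α] {F H : Set (Set α)} {A : Set α}
    (hAF : A ∈ F) (hAH : A ∈ H) : Forced F H A :=
  ⟨A, hAF, hAH, Relation.ReflTransGen.refl⟩

theorem forced_pair [Fintype α] {F H : Set (Set α)} {C D : Set α}
    (hC : C ∈ F) (hD : D ∈ F) (h1 : Forced F H C) (h2 : ¬ Forced F H D) :
    Ok (cut F H) C D := by
  by_contra hno
  obtain ⟨A, hAF, hAH, hr⟩ := h1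
  exact h2 ⟨A, hAF, hAH, hr.tail ⟨hC, hD, hno⟩⟩

theorem chain [Fintype α] {F H : Set (Set α)} (hABA : ABAFree F) {A X : Set α}
    (hA : A ∈ F)
    (h : Relation.ReflTransGen (fun X Y => X ∈ F ∧ Y ∈ F ∧ ¬ Ok (cut F H) X Y) A X) :
    A = X ∨ (X ∈ F ∧ ¬ Ok (cut F H) A X) := by
  induction h with
  | refl => exact Or.inl rfl
  | tail hab hbc ih =>
    rcases ih with rfl | ⟨hbF, hnAb⟩
    · exact Or.inr ⟨hbc.2.1, hbc.2.2⟩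
    · exact Or.inr ⟨hbc.2.1, ok_trans (sep_of_abaFree hABA hA hbF)
        (sep_of_abaFree hABA hbF hbc.2.1) hnAb hbc.2.2⟩

theorem not_forced [Fintype α] {F H : Set (Set α)} (hABA : ABAFree F)
    (hHelly : ∀ A ∈ H, ∀ B ∈ H, ∀ C ∈ H, (A ∩ B ∩ C).Nonempty)
    {B : Set α} (hBF : B ∈ F) (hBH : Bᶜ ∈ H) : ¬ Forced F H B := by
  rintro ⟨A0, hA0F, hA0H, hr⟩
  rcases chain hABA hA0F hr with rfl | ⟨_, hnOk⟩
  · obtain ⟨x, hx⟩ := hHelly A0 hA0H A0ᶜ hBH A0 hA0H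
    exact hx.1.2 hx.1.1
  · exact hnOk (okPN hABA hHelly hA0F hA0H hBF hBH)

/-- Embedding of `Option α` into a lexicographic order: `none` sits just above `p`. -/
def emb (p : WithBot α) : Option α → Lex (WithBot α × Bool) := fun o =>
  o.elim (toLex (p, true)) (fun x => toLex ((x : WithBot α), false))

theorem emb_inj (p : WithBot α) : Function.Injective (emb p) := by
  intro a b hab
  cases a with
  | none =>
    cases b with
    | none => rfl
    | some y =>
      have h2 : (true : Bool) = false := congrArg (fun z => (ofLex z).2) hab
      exact Bool.noConfusion h2
  | some x =>
    cases b with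
    | none =>
      have h2 : (false : Bool) = true := congrArg (fun z => (ofLex z).2) hab
      exact Bool.noConfusion h2
    | some y =>
      have h1 : (x : WithBot α) = (y : WithBot α) := congrArg (fun z => (ofLex z).1) hab
      exact congrArg some (WithBot.coe_inj.mp h1)

theorem emb_ss (p : WithBot α) (a b : α) : emb p (some a) < emb p (some b) ↔ a < b := by
  show toLex ((a : WithBot α), false) < toLex ((b : WithBot α), false) ↔ a < b
  rw [Prod.Lex.lt_iff]
  constructor
  · rintro (h | ⟨_, hb⟩)
    · exact WithBot.coe_lt_coe.mp h
    · simp at hb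
  · intro h
    exact Or.inl (WithBot.coe_lt_coe.mpr h)

theorem emb_sn (p : WithBot α) (a : α) :
    emb p (some a) < emb p none ↔ (a : WithBot α) ≤ p := by
  show toLex ((a : WithBot α), false) < toLex (p, true) ↔ (a : WithBot α) ≤ p
  rw [Prod.Lex.lt_iff]
  constructor
  · rintro (h | ⟨h, _⟩)
    · exact h.le
    · exact le_of_eq h
  · intro h
    rcases h.lt_or_eq with h' | h'
    · exact Or.inl h'
    · exact Or.inr ⟨h', Bool.false_lt_true⟩

theorem emb_ns (p : WithBot α) (a : α) :
    emb p none < emb p (some a) ↔ p < (a : WithBot α) := by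
  show toLex (p, true) < toLex ((a : WithBot α), false) ↔ p < (a : WithBot α)
  rw [Prod.Lex.lt_iff]
  constructor
  · rintro (h | ⟨_, hb⟩)
    · exact h
    · exact Bool.noConfusion (Bool.lt_iff.mp hb).1
  · intro h
    exact Or.inl h

end PDHHelper

open PDHHelper

/-- Primal discrete Helly theorem for pseudohalfplanes (3 → +1): if every three
hyperedges of a pseudohalfplane hypergraph have a common vertex, the hypergraph can be
extended by a new vertex (inserted somewhere into the order, here modelled as `none` in
`Option α` with a linear order extending that of `α`) contained in every extended
hyperedge, so that the result is still a pseudohalfplane hypergraph. -/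
theorem primal_discrete_helly_pseudohalfplanes {α : Type*} [LinearOrder α] [Fintype α]
    (F : Set (Set α)) (hABA : ABAFree F)
    (H : Set (Set α)) (hH : H ⊆ F ∪ compl '' F)
    (hHelly : ∀ A ∈ H, ∀ B ∈ H, ∀ C ∈ H, (A ∩ B ∩ C).Nonempty) :
    ∃ ℓ : LinearOrder (Option α),
      (∀ a b : α, @LT.lt (Option α) ℓ.toLT (some a) (some b) ↔ a < b) ∧
      ∃ g : Set α → Set (Option α),
        (∀ A ∈ F, some ⁻¹' g A = A) ∧
        @ABAFree (Option α) ℓ ((fun A => g A) '' F) ∧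
        (∀ A ∈ F, A ∈ H → (none : Option α) ∈ g A) ∧
        (∀ A ∈ F, Aᶜ ∈ H → (none : Option α) ∉ g A) := by
  classical
  set p : WithBot α := cut F H with hp
  have hmS : ∀ (A : Set α) (u : α),
      some u ∈ (some '' A) ∪ {o : Option α | o = none ∧ Forced F H A} ↔ u ∈ A := by
    intro A u
    constructor
    · rintro (⟨v, hv, he⟩ | ⟨he, _⟩)
      · injection he with h; exact h ▸ hv
      · exact absurd he (by simp)
    · intro h
      exact Or.inl ⟨u, h, rfl⟩
  have hmN : ∀ A : Set α,
      (none : Option α) ∈ (some '' A) ∪ {o : Option α | o = none ∧ Forced F H A} ↔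
        Forced F H A := by
    intro A
    constructor
    · rintro (⟨v, _, he⟩ | ⟨_, h⟩)
      · exact absurd he (by simp)
      · exact h
    · intro h
      exact Or.inr ⟨rfl, h⟩
  refine ⟨LinearOrder.lift' (emb p) (emb_inj p), fun a b => emb_ss p a b,
    fun A => (some '' A) ∪ {o : Option α | o = none ∧ Forced F H A}, ?_, ?_, ?_, ?_⟩
  · intro A _
    ext u
    simp only [Set.mem_preimage]
    exact hmS A u
  · rintro ⟨A', ⟨C, hCF, rfl⟩, B', ⟨D, hDF, rfl⟩, x, y, z, hxy, hyz, hxA, hxB, hzA, hzB,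
      hyB, hyA⟩
    have hxy' : emb p x < emb p y := hxy
    have hyz' : emb p y < emb p z := hyz
    cases x with
    | none =>
      cases y with
      | none => exact absurd hxy' (lt_irrefl _)
      | some v =>
        cases z with
        | none => exact absurd (hxy'.trans hyz') (lt_irrefl _)
        | some w =>
          have hdC : Forced F H C := (hmN C).mp hxA
          have hdD : ¬ Forced F H D := fun h => hxB ((hmN D).mpr h)
          have hv : v ∈ D := (hmS D v).mp hyB
          have hvC : v ∉ C := fun h => hyA ((hmS C v).mpr h)
          have hw : w ∈ C := (hmS C w).mp hzA
          have hwD : w ∉ D := fun h => hzB ((hmS D w).mpr h)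
          have hpv : p < (v : WithBot α) := (emb_ns p v).mp hxy'
          have hvw : v < w := (emb_ss p v w).mp hyz'
          rcases forced_pair hCF hDF hdC hdD with h | h
          · exact absurd ((h v ⟨hv, hvC⟩).2 w ⟨hw, hwD⟩) (not_lt.mpr hvw.le)
          · exact absurd (h v ⟨hv, hvC⟩).1 (not_le.mpr hpv)
    | some u =>
      cases y with
      | none =>
        cases z with
        | none => exact absurd hyz' (lt_irrefl _)
        | some w =>
          have hdD : Forced F H D := (hmN D).mp hyB
          have hdC : ¬ Forced F H C := fun h => hyA ((hmN C).mpr h)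
          have hu : u ∈ C := (hmS C u).mp hxA
          have huD : u ∉ D := fun h => hxB ((hmS D u).mpr h)
          have hw : w ∈ C := (hmS C w).mp hzA
          have hwD : w ∉ D := fun h => hzB ((hmS D w).mpr h)
          have hup : (u : WithBot α) ≤ p := (emb_sn p u).mp hxy'
          have hpw : p < (w : WithBot α) := (emb_ns p w).mp hyz'
          rcases forced_pair hDF hCF hdD hdC with h | h
          · exact absurd (h u ⟨hu, huD⟩).1 (not_lt.mpr hup)
          · exact absurd (h w ⟨hw, hwD⟩).1 (not_le.mpr hpw)
      | some v =>
        cases z with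
        | none =>
          have hdC : Forced F H C := (hmN C).mp hzA
          have hdD : ¬ Forced F H D := fun h => hzB ((hmN D).mpr h)
          have hu : u ∈ C := (hmS C u).mp hxA
          have huD : u ∉ D := fun h => hxB ((hmS D u).mpr h)
          have hv : v ∈ D := (hmS D v).mp hyB
          have hvC : v ∉ C := fun h => hyA ((hmS C v).mpr h)
          have huv : u < v := (emb_ss p u v).mp hxy'
          have hvp : (v : WithBot α) ≤ p := (emb_sn p v).mp hyz'
          rcases forced_pair hCF hDF hdC hdD with h | h
          · exact absurd (h v ⟨hv, hvC⟩).1 (not_lt.mpr hvp)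
          · exact absurd ((h v ⟨hv, hvC⟩).2 u ⟨hu, huD⟩) (not_lt.mpr huv.le)
        | some w =>
          exact hABA ⟨C, hCF, D, hDF, u, v, w, (emb_ss p u v).mp hxy',
            (emb_ss p v w).mp hyz', (hmS C u).mp hxA,
            fun h => hxB ((hmS D u).mpr h), (hmS C w).mp hzA,
            fun h => hzB ((hmS D w).mpr h), (hmS D v).mp hyB,
            fun h => hyA ((hmS C v).mpr h)⟩
  · intro A hAF hAH
    exact Or.inr ⟨rfl, forced_of_mem hAF hAH⟩
  · intro A hAF hAc hmem
    exact not_forced hABA hHelly hAF hAc ((hmN A).mp hmem)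
end

section
/- Carathéodory's theorem for pseudoconvex sets: let H be a pseudohalfplane hypergraph on vertex set S, S' ⊆ S, and v ∈ S. If v is strongly inside the convex hull of S' (equivalently, v is not an extremal vertex of H[S' ∪ {v}]), then there exists S'' ⊆ S' with |S''| ≤ 3 such that v ∈ Conv(S'') in H; moreover S'' can be chosen to consist of extremal vertices of H[S']. -/
/-!
A vertex `w` of `S` that is skipped both by a topset and by a bottomset of `H[S]` can be
removed from `S`: whenever a member of `F` skips `a` with `w` as a witness, ABA-freeness
reroutes the skipping through the witnesses that skip `w`. So every vertex strongly inside `S`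
stays strongly inside `S \ {w}`; in particular `v` does, and extremality in `S \ {w}` implies
extremality in `S`. Removing such vertices one at a time reduces to the case where all of `S`
is extremal. There `v` is skipped by some `A ∈ F` through `x < v < z` and lies in some `B ∈ F`
avoiding `x' < v < z'`, and ABA-freeness puts `v` into the convex hull of `{x', z', z}` or of
`{x, z, x'}`.
-/

section Caratheodory

variable {α : Type*} [LinearOrder α]

/-- `a` is skipped by a member of `F` restricted to `S ∪ {a}`; applied to `compl '' F` this
says that `a` is skipped by a bottomset. -/
def SkippedBy (F : Set (Set α)) (S : Set α) (a : α) : Prop :=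
  ∃ A ∈ F, a ∉ A ∧ (∃ x ∈ A ∩ S, x < a) ∧ ∃ z ∈ A ∩ S, a < z

/-- For `a ∈ S`, being extremal in `H[S]` means not being strongly inside `S`. -/
def StronglyInside (F : Set (Set α)) (S : Set α) (a : α) : Prop :=
  SkippedBy F S a ∧ SkippedBy (compl '' F) S a

variable {F H : Set (Set α)} {A S : Set α} {a v w : α}

theorem skips_inter_insert_iff :
    Skips (A ∩ insert a S) a ↔ a ∉ A ∧ (∃ x ∈ A ∩ S, x < a) ∧ ∃ z ∈ A ∩ S, a < z := by
  simp only [Skips, Set.mem_inter_iff, Set.mem_insert_iff, true_or, and_true]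
  grind

theorem unskippable_image_inter_insert_iff :
    Unskippable ((fun A => A ∩ insert a S) '' F) a ↔ ¬ SkippedBy F S a := by
  simp only [Unskippable, Set.forall_mem_image, skips_inter_insert_iff, SkippedBy, not_exists,
    not_and]

theorem unskippable_or_unskippable_iff :
    (Unskippable ((fun A => A ∩ insert a S) '' F) a ∨
      Unskippable ((fun A => insert a S \ A) '' F) a) ↔ ¬ StronglyInside F S a := by
  have hdiff : (fun A => insert a S \ A) '' F = (fun A => A ∩ insert a S) '' (compl '' F) := by
    simp only [Set.image_image, Set.sdiff_eq, Set.inter_comm]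
  rw [hdiff, unskippable_image_inter_insert_iff, unskippable_image_inter_insert_iff,
    StronglyInside, not_and_or]

theorem ABAFree.compl_image (hF : ABAFree F) : ABAFree (compl '' F) := by
  rintro ⟨_, ⟨A, hA, rfl⟩, _, ⟨B, hB, rfl⟩, x, y, z, hxy, hyz, hxA, hxB, hzA, hzB, hyB, hyA⟩
  simp only [Set.mem_compl_iff, not_not] at hxA hxB hzA hzB hyB hyA
  exact hF ⟨B, hB, A, hA, x, y, z, hxy, hyz, hxB, hxA, hzB, hzA, hyA, hyB⟩

theorem mem_conv_of_forall {X : Set α} (hH : H ⊆ F ∪ compl '' F)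
    (htop : ∀ G ∈ F, X ⊆ G → v ∈ G) (hbot : ∀ D ∈ F, X ⊆ Dᶜ → v ∉ D) : v ∈ Conv H X := by
  refine Set.mem_sInter.2 fun G ⟨hGH, hXG⟩ => ?_
  rcases hH hGH with hG | ⟨D, hD, rfl⟩
  exacts [htop G hG hXG, hbot D hD hXG]

theorem skippedBy_diff_singleton_of_lt (hF : ABAFree F) (hw : SkippedBy F S w)
    (hA : A ∈ F) (haA : a ∉ A) (hwA : w ∈ A) (hwa : w < a) {q : α} (hq : q ∈ A ∩ S)
    (haq : a < q) : SkippedBy F (S \ {w}) a := by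
  obtain ⟨A₁, hA₁, hwA₁, ⟨u, ⟨huA₁, huS⟩, huw⟩, ⟨t, ⟨htA₁, htS⟩, hwt⟩⟩ := hw
  have hq' : q ∈ A ∩ (S \ {w}) := ⟨hq.1, hq.2, (hwa.trans haq).ne'⟩
  by_cases huA : u ∈ A
  · exact ⟨A, hA, haA, ⟨u, ⟨huA, huS, huw.ne⟩, huw.trans hwa⟩, q, hq', haq⟩
  have htA : t ∈ A := by
    by_contra htA
    exact hF ⟨A₁, hA₁, A, hA, u, w, t, huw, hwt, huA₁, huA, htA₁, htA, hwA, hwA₁⟩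
  rcases lt_or_gt_of_ne (ne_of_mem_of_not_mem htA haA) with hta | hat
  · exact ⟨A, hA, haA, ⟨t, ⟨htA, htS, hwt.ne'⟩, hta⟩, q, hq', haq⟩
  · have haA₁ : a ∉ A₁ := fun haA₁ =>
      hF ⟨A₁, hA₁, A, hA, u, w, a, huw, hwa, huA₁, huA, haA₁, haA, hwA, hwA₁⟩
    exact ⟨A₁, hA₁, haA₁, ⟨u, ⟨huA₁, huS, huw.ne⟩, huw.trans hwa⟩, t, ⟨htA₁, htS, hwt.ne'⟩, hat⟩

theorem skippedBy_diff_singleton_of_gt (hF : ABAFree F) (hw : SkippedBy F S w)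
    (hA : A ∈ F) (haA : a ∉ A) (hwA : w ∈ A) (haw : a < w) {p : α} (hp : p ∈ A ∩ S)
    (hpa : p < a) : SkippedBy F (S \ {w}) a := by
  obtain ⟨A₁, hA₁, hwA₁, ⟨u, ⟨huA₁, huS⟩, huw⟩, ⟨t, ⟨htA₁, htS⟩, hwt⟩⟩ := hw
  have hp' : p ∈ A ∩ (S \ {w}) := ⟨hp.1, hp.2, (hpa.trans haw).ne⟩
  by_cases htA : t ∈ A
  · exact ⟨A, hA, haA, ⟨p, hp', hpa⟩, t, ⟨htA, htS, hwt.ne'⟩, haw.trans hwt⟩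
  have huA : u ∈ A := by
    by_contra huA
    exact hF ⟨A₁, hA₁, A, hA, u, w, t, huw, hwt, huA₁, huA, htA₁, htA, hwA, hwA₁⟩
  rcases lt_or_gt_of_ne (ne_of_mem_of_not_mem huA haA) with hua | hau
  · have haA₁ : a ∉ A₁ := fun haA₁ =>
      hF ⟨A₁, hA₁, A, hA, a, w, t, haw, hwt, haA₁, haA, htA₁, htA, hwA, hwA₁⟩
    exact ⟨A₁, hA₁, haA₁, ⟨u, ⟨huA₁, huS, huw.ne⟩, hua⟩, t, ⟨htA₁, htS, hwt.ne'⟩, haw.trans hwt⟩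
  · exact ⟨A, hA, haA, ⟨p, hp', hpa⟩, u, ⟨huA, huS, huw.ne⟩, hau⟩

theorem SkippedBy.diff_singleton (hF : ABAFree F) (hw : SkippedBy F S w)
    (ha : SkippedBy F S a) : SkippedBy F (S \ {w}) a := by
  obtain ⟨A, hA, haA, ⟨p, hp, hpa⟩, q, hq, haq⟩ := ha
  by_cases hpw : p = w
  · subst hpw
    exact skippedBy_diff_singleton_of_lt hF hw hA haA hp.1 hpa hq haq
  by_cases hqw : q = w
  · subst hqw
    exact skippedBy_diff_singleton_of_gt hF hw hA haA hq.1 haq hp hpa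
  exact ⟨A, hA, haA, ⟨p, ⟨hp.1, hp.2, hpw⟩, hpa⟩, q, ⟨hq.1, hq.2, hqw⟩, haq⟩

theorem StronglyInside.diff_singleton (hF : ABAFree F) (hw : StronglyInside F S w)
    (ha : StronglyInside F S a) : StronglyInside F (S \ {w}) a :=
  ⟨hw.1.diff_singleton hF ha.1, hw.2.diff_singleton hF.compl_image ha.2⟩

theorem StronglyInside.exists_mem_conv_triple (hF : ABAFree F) (hH : H ⊆ F ∪ compl '' F)
    (hv : StronglyInside F S v) :
    ∃ x y z, x ∈ S ∧ y ∈ S ∧ z ∈ S ∧ v ∈ Conv H {x, y, z} := by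
  obtain ⟨⟨A, hA, hvA, ⟨x, ⟨hxA, hxS⟩, hxv⟩, z, ⟨hzA, hzS⟩, hvz⟩,
    ⟨_, ⟨B, hB, rfl⟩, hvB, ⟨x', ⟨hx'B, hx'S⟩, hx'v⟩, z', ⟨hz'B, hz'S⟩, hvz'⟩⟩ := hv
  rw [Set.mem_compl_iff, not_not] at hvB
  by_cases hC : ∃ C ∈ F, v ∉ C ∧ x ∈ C ∧ z ∈ C ∧ x' ∈ C
  · obtain ⟨C, hC, hvC, -, hzC, hx'C⟩ := hC
    refine ⟨x', z', z, hx'S, hz'S, hzS, mem_conv_of_forall hH (fun G hG hXG => ?_)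
      fun D hD hXD hvD => ?_⟩
    · by_contra hvG
      exact hF ⟨G, hG, B, hB, x', v, z', hx'v, hvz', hXG (by simp), hx'B, hXG (by simp), hz'B,
        hvB, hvG⟩
    · exact hF ⟨C, hC, D, hD, x', v, z, hx'v, hvz, hx'C, hXD (by simp), hzC, hXD (by simp),
        hvD, hvC⟩
  · refine ⟨x, z, x', hxS, hzS, hx'S, mem_conv_of_forall hH (fun G hG hXG => ?_)
      fun D hD hXD hvD => ?_⟩
    · by_contra hvG
      exact hC ⟨G, hG, hvG, hXG (by simp), hXG (by simp), hXG (by simp)⟩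
    · exact hF ⟨A, hA, D, hD, x, v, z, hxv, hvz, hxA, hXD (by simp), hzA, hXD (by simp),
        hvD, hvA⟩

theorem StronglyInside.exists_extremal_mem_conv (hF : ABAFree F) (hH : H ⊆ F ∪ compl '' F)
    (hS : S.Finite) (hv : StronglyInside F S v) :
    ∃ T : Finset α, ↑T ⊆ S ∧ T.card ≤ 3 ∧ v ∈ Conv H ↑T ∧
      ∀ a ∈ T, ¬ StronglyInside F S a := by
  induction hn : S.ncard using Nat.strong_induction_on generalizing S with
  | _ n ih =>
  by_cases hext : ∀ a ∈ S, ¬ StronglyInside F S a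
  · obtain ⟨x, y, z, hx, hy, hz, hconv⟩ := hv.exists_mem_conv_triple hF hH
    refine ⟨{x, y, z}, ?_, Finset.card_le_three, by simpa using hconv, fun a ha => hext a ?_⟩
    · simp [Set.insert_subset_iff, hx, hy, hz]
    · simp only [Finset.mem_insert, Finset.mem_singleton] at ha
      rcases ha with rfl | rfl | rfl <;> assumption
  push Not at hext
  obtain ⟨w, hwS, hw⟩ := hext
  obtain ⟨T, hTS, hcard, hconv, hT⟩ := ih _ (hn ▸ Set.ncard_sdiff_singleton_lt_of_mem hwS hS)
    hS.sdiff (hw.diff_singleton hF hv) rfl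
  exact ⟨T, hTS.trans Set.sdiff_subset, hcard, hconv,
    fun a ha haS => hT a ha (hw.diff_singleton hF haS)⟩

end Caratheodory

/-- Carathéodory's theorem for pseudoconvex sets: if `v` is strongly inside the convex
hull of `S'` (equivalently, `v` is not an extremal vertex of the induced subhypergraph
on `S' ∪ {v}`), then `v` lies in the convex hull of at most 3 vertices of `S'`, each of
which is an extremal vertex of the induced subhypergraph on `S'`. -/
theorem caratheodory_pseudoconvex {α : Type*} [LinearOrder α] [Fintype α]
    (F : Set (Set α)) (hABA : ABAFree F)
    (H : Set (Set α)) (hH : H ⊆ F ∪ compl '' F)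
    (S' : Set α) (v : α)
    (hv : ¬ (Unskippable ((fun A => A ∩ insert v S') '' F) v ∨
             Unskippable ((fun A => insert v S' \ A) '' F) v)) :
    ∃ S'' : Finset α, ↑S'' ⊆ S' ∧ S''.card ≤ 3 ∧ v ∈ Conv H ↑S'' ∧
      ∀ a ∈ S'', Unskippable ((fun A => A ∩ S') '' F) a ∨
                 Unskippable ((fun A => S' \ A) '' F) a := by
  rw [unskippable_or_unskippable_iff, not_not] at hv
  obtain ⟨T, hTS, hcard, hconv, hT⟩ := hv.exists_extremal_mem_conv hABA hH S'.toFinite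
  refine ⟨T, hTS, hcard, hconv, fun a ha => ?_⟩
  rw [← Set.insert_eq_of_mem (hTS ha), unskippable_or_unskippable_iff]
  exact hT a ha
end

section
/- Steinitz's theorem for pseudoconvex sets: let H be a pseudohalfplane hypergraph on vertex set S, S' ⊆ S, and v ∈ S. If v is not an extremal vertex of H[S' ∪ {v}], then there exists S'' ⊆ S' with |S''| ≤ 4 such that v is not an extremal vertex of H[S'' ∪ {v}]. -/
/-- Steinitz's theorem for pseudoconvex sets: if `v` is not an extremal vertex of the
induced subhypergraph on `S' ∪ {v}`, then there are at most 4 vertices `S'' ⊆ S'` such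
that `v` is not an extremal vertex of the induced subhypergraph on `S'' ∪ {v}`. -/
theorem steinitz_pseudoconvex {α : Type*} [LinearOrder α] [Fintype α]
    (F : Set (Set α)) (hABA : ABAFree F)
    (H : Set (Set α)) (hH : H ⊆ F ∪ compl '' F)
    (S' : Set α) (v : α)
    (hv : ¬ (Unskippable ((fun A => A ∩ insert v S') '' F) v ∨
             Unskippable ((fun A => insert v S' \ A) '' F) v)) :
    ∃ S'' : Finset α, ↑S'' ⊆ S' ∧ S''.card ≤ 4 ∧
      ¬ (Unskippable ((fun A => A ∩ insert v (↑S'' : Set α)) '' F) v ∨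
         Unskippable ((fun A => insert v (↑S'' : Set α) \ A) '' F) v) := by
  push_neg at hv
  obtain ⟨h1, h2⟩ := hv
  simp only [Unskippable, not_forall] at h1 h2
  obtain ⟨G1, hG1, hs1⟩ := h1
  obtain ⟨G2, hG2, hs2⟩ := h2
  obtain ⟨A, hA, rfl⟩ := hG1
  obtain ⟨B, hB, rfl⟩ := hG2
  simp only [not_not] at hs1 hs2
  obtain ⟨hvA, ⟨x1, hx1, hx1v⟩, ⟨z1, hz1, hz1v⟩⟩ := hs1
  obtain ⟨hvB, ⟨x2, hx2, hx2v⟩, ⟨z2, hz2, hz2v⟩⟩ := hs2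
  have hvA' : v ∉ A := fun h => hvA ⟨h, Set.mem_insert _ _⟩
  have hvB' : v ∈ B := by
    by_contra h; exact hvB ⟨Set.mem_insert _ _, h⟩
  have hx1S : x1 ∈ S' := (hx1.2.resolve_left (ne_of_lt hx1v))
  have hz1S : z1 ∈ S' := (hz1.2.resolve_left (ne_of_gt hz1v))
  have hx2S : x2 ∈ S' := (hx2.1.resolve_left (ne_of_lt hx2v))
  have hz2S : z2 ∈ S' := (hz2.1.resolve_left (ne_of_gt hz2v))
  refine ⟨{x1, z1, x2, z2}, ?_, ?_, ?_⟩
  · intro a ha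
    simp only [Finset.coe_insert, Finset.coe_singleton, Set.mem_insert_iff,
      Set.mem_singleton_iff] at ha
    rcases ha with rfl | rfl | rfl | rfl <;> assumption
  · apply le_trans (Finset.card_insert_le _ _)
    apply Nat.succ_le_succ
    apply le_trans (Finset.card_insert_le _ _)
    apply Nat.succ_le_succ
    exact Finset.card_insert_le _ _
  · push_neg
    have hmem : ∀ a ∈ ({x1, z1, x2, z2} : Finset α),
        a ∈ (↑({x1, z1, x2, z2} : Finset α) : Set α) := fun a ha => ha
    constructor
    · intro hU
      refine hU _ ⟨A, hA, rfl⟩ ⟨?_, ⟨x1, ?_, hx1v⟩, ⟨z1, ?_, hz1v⟩⟩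
      · exact fun h => hvA' h.1
      · exact ⟨hx1.1, Set.mem_insert_of_mem _ (by simp)⟩
      · exact ⟨hz1.1, Set.mem_insert_of_mem _ (by simp)⟩
    · intro hU
      refine hU _ ⟨B, hB, rfl⟩ ⟨?_, ⟨x2, ?_, hx2v⟩, ⟨z2, ?_, hz2v⟩⟩
      · exact fun h => h.2 hvB'
      · exact ⟨Set.mem_insert_of_mem _ (by simp), hx2.2⟩
      · exact ⟨Set.mem_insert_of_mem _ (by simp), hz2.2⟩
end

section
/- Cup-cap lemma for pseudohalfplane hypergraphs: let H be a pseudohalfplane hypergraph on vertex set S and v a vertex. If A = {a_1 < a_2 < ... < a_k = v} is a k-cup ending at v and B = {v = b_1 < b_2 < ... < b_l} is an l-cap starting at v, then either A ∪ {b_2} is a (k+1)-cup or {a_{k-1}} ∪ B is an (l+1)-cap. -/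
/-- `A` is a cup: every vertex of `A` is a bottomvertex of the induced subhypergraph,
i.e. no induced bottomset `A \ G` (for `G ∈ F`) skips any vertex of `A`. -/
def IsCup {α : Type*} [LinearOrder α] (F : Set (Set α)) (A : Set α) : Prop :=
  ∀ a ∈ A, ∀ G ∈ F, ¬ Skips (A \ G) a

/-- `A` is a cap: every vertex of `A` is a topvertex of the induced subhypergraph,
i.e. no induced topset `A ∩ G` (for `G ∈ F`) skips any vertex of `A`. -/
def IsCap {α : Type*} [LinearOrder α] (F : Set (Set α)) (A : Set α) : Prop :=
  ∀ a ∈ A, ∀ G ∈ F, ¬ Skips (A ∩ G) a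

/-- Cup-cap lemma: if `A` is a cup ending at `v` (with second largest element `a`) and
`B` is a cap starting at `v` (with second smallest element `b`), then `A ∪ {b}` is a cup
or `{a} ∪ B` is a cap. -/
theorem cup_cap_lemma {α : Type*} [LinearOrder α] [Fintype α]
    (F : Set (Set α)) (hABA : ABAFree F)
    (A B : Finset α) (v a b : α)
    (hvA : v ∈ A) (hvmax : ∀ x ∈ A, x ≤ v)
    (hvB : v ∈ B) (hvmin : ∀ x ∈ B, v ≤ x)
    (hcup : IsCup F ↑A) (hcap : IsCap F ↑B)
    (haA : a ∈ A) (hav : a < v) (hasecond : ∀ x ∈ A, x ≠ v → x ≤ a)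
    (hbB : b ∈ B) (hvb : v < b) (hbsecond : ∀ x ∈ B, x ≠ v → b ≤ x) :
    IsCup F (↑A ∪ {b}) ∨ IsCap F ({a} ∪ ↑B) := by
  by_contra hcon
  push_neg at hcon
  obtain ⟨hnotcup, hnotcap⟩ := hcon
  -- extract cup-failure witnesses
  simp only [IsCup, not_forall] at hnotcup
  obtain ⟨x, hxS, G, hGF, hskip⟩ := hnotcup
  simp only [not_not] at hskip
  obtain ⟨hxnot, ⟨p, hpmem, hpx⟩, ⟨z, hzmem, hxz⟩⟩ := hskip
  -- extract cap-failure witnesses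
  simp only [IsCap, not_forall] at hnotcap
  obtain ⟨y, hyS, G', hG'F, hskip'⟩ := hnotcap
  simp only [not_not] at hskip'
  obtain ⟨hynot, ⟨q, hqmem, hqy⟩, ⟨r, hrmem, hyr⟩⟩ := hskip'
  -- analyze cup failure
  have hzS : z ∈ (↑A : Set α) ∪ {b} := hzmem.1
  have hzb : z ≤ b := by
    rcases hzS with h | h
    · exact le_trans (hvmax z (Finset.mem_coe.mp h)) (le_of_lt hvb)
    · exact le_of_eq h
  have hxb : x ≠ b := fun h => absurd hxz (by rw [h]; exact not_lt_of_ge hzb)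
  have hxA : x ∈ A := by
    rcases hxS with h | h
    · exact Finset.mem_coe.mp h
    · exact absurd h hxb
  have hxv : x ≤ v := hvmax x hxA
  have hxG : x ∈ G := by
    by_contra h
    exact hxnot ⟨Or.inl hxA, h⟩
  have hpA : p ∈ A := by
    rcases hpmem.1 with h | h
    · exact h
    · exact absurd (h ▸ hpx : b < x) (not_lt_of_ge (le_of_lt (lt_of_le_of_lt hxv hvb)))
  have hpG : p ∉ G := hpmem.2
  -- all elements of A above x lie in G
  have hAaboveG : ∀ w ∈ A, x < w → w ∈ G := by
    intro w hwA hxw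
    by_contra hwG
    exact hcup x hxA G hGF ⟨fun h => h.2 hxG, ⟨p, ⟨hpA, hpG⟩, hpx⟩, ⟨w, ⟨hwA, hwG⟩, hxw⟩⟩
  have hvG : v ∈ G := by
    rcases eq_or_lt_of_le hxv with h | h
    · exact h ▸ hxG
    · exact hAaboveG v hvA h
  have hbG : b ∉ G := by
    rcases hzS with h | h
    · exact absurd (hAaboveG z h hxz) hzmem.2
    · exact h ▸ hzmem.2
  -- analyze cap failure
  have hqS : q ∈ ({a} : Set α) ∪ ↑B := hqmem.1
  have hya : y ≠ a := by
    intro h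
    rcases hqS with hq | hq
    · have hq' : q = a := hq
      rw [hq', h] at hqy; exact lt_irrefl a hqy
    · exact absurd hqy (not_lt_of_ge (h ▸ le_trans (le_of_lt hav) (hvmin q hq)))
  have hyB : y ∈ B := by
    rcases hyS with h | h
    · exact absurd h hya
    · exact h
  have hvy : v ≤ y := hvmin y hyB
  have hyG' : y ∉ G' := fun h => hynot ⟨Or.inr hyB, h⟩
  have hrB : r ∈ B := by
    rcases hrmem.1 with h | h
    · exact absurd (h ▸ hyr : y < a) (not_lt_of_ge (le_trans (le_of_lt hav) hvy))
    · exact h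
  have hrG' : r ∈ G' := hrmem.2
  -- all elements of B below y lie outside G'
  have hBbelowG' : ∀ w ∈ B, w < y → w ∉ G' := by
    intro w hwB hwy hwG'
    exact hcap y hyB G' hG'F ⟨fun h => hyG' h.2, ⟨w, ⟨hwB, hwG'⟩, hwy⟩, ⟨r, ⟨hrB, hrG'⟩, hyr⟩⟩
  have hvG' : v ∉ G' := by
    rcases eq_or_lt_of_le hvy with h | h
    · exact h ▸ hyG'
    · exact hBbelowG' v hvB h
  have haG' : a ∈ G' := by
    rcases hqS with h | h
    · exact h ▸ hqmem.2
    · exact absurd hqmem.2 (hBbelowG' q (Finset.mem_coe.mp h) hqy)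
  -- cap property of B with G: elements of B above b are outside G
  have hBaboveG : ∀ w ∈ B, b < w → w ∉ G := by
    intro w hwB hbw hwG
    exact hcap b hbB G hGF ⟨fun h => hbG h.2, ⟨v, ⟨hvB, hvG⟩, hvb⟩, ⟨w, ⟨hwB, hwG⟩, hbw⟩⟩
  -- cup property of A with G': elements of A below a are in G'
  have hAbelowG' : ∀ w ∈ A, w < a → w ∈ G' := by
    intro w hwA hwa
    by_contra hwG'
    exact hcup a haA G' hG'F ⟨fun h => h.2 haG', ⟨w, ⟨hwA, hwG'⟩, hwa⟩, ⟨v, ⟨hvA, hvG'⟩, hav⟩⟩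
  -- p ∈ G'
  have hpv : p < v := lt_of_lt_of_le hpx hxv
  have hpa : p ≤ a := hasecond p hpA (ne_of_lt hpv)
  have hpG' : p ∈ G' := by
    rcases eq_or_lt_of_le hpa with h | h
    · exact h ▸ haG'
    · exact hAbelowG' p hpA h
  -- r ∉ G
  have hvr : v < r := lt_of_le_of_lt hvy hyr
  have hbr : b ≤ r := hbsecond r hrB (ne_of_gt hvr)
  have hrG : r ∉ G := by
    rcases eq_or_lt_of_le hbr with h | h
    · exact h ▸ hbG
    · exact hBaboveG r hrB h
  exact hABA ⟨G', hG'F, G, hGF, p, v, r, hpv, hvr, hpG', hpG, hrG', hrG, hvG, hvG'⟩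
end

section
/- Cup-Cap theorem for pseudoconvex sets: every pseudohalfplane hypergraph on a vertex set of size at least binomial(k+l-4, k-2) + 1 contains a k-cup or an l-cap. -/
/-!
Cups and caps are "convex" with respect to the hyperedges: a cup never has a middle vertex in a
hyperedge whose two outer vertices avoid it, and a cap never has a middle vertex outside a hyperedge
containing its two outer vertices. The bound then follows the Erdős–Szekeres argument: split the
vertices according to whether they end a `(k-1)`-cup. If the non-endpoints are many, they hold an
`l`-cap (a `(k-1)`-cup among them would end at a non-endpoint); otherwise the endpoints hold a
`k`-cup or an `(l-1)`-cap `D`. In the latter case the first vertex `p` of `D` ends a `(k-1)`-cup `C`,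
and either the second vertex of `D` extends `C`, or the hyperedge witnessing the failure yields a
vertex of `C` before `p` extending `D`; a failure of both would produce an ABA pattern.
-/

open Finset

section

variable {α : Type*} [LinearOrder α] {F : Set (Set α)}

theorem isCup_iff {A : Set α} :
    IsCup F A ↔ ∀ G ∈ F, ∀ x ∈ A, ∀ y ∈ A, ∀ z ∈ A, x < y → y < z → x ∉ G → z ∉ G → y ∉ G := by
  constructor
  · intro h G hG x hx y hy z hz hxy hyz hxG hzG hyG
    exact h y hy G hG ⟨fun hy' => hy'.2 hyG, ⟨x, ⟨hx, hxG⟩, hxy⟩, ⟨z, ⟨hz, hzG⟩, hyz⟩⟩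
  · rintro h a ha G hG ⟨haG, ⟨x, ⟨hx, hxG⟩, hxa⟩, ⟨z, ⟨hz, hzG⟩, haz⟩⟩
    exact haG ⟨ha, h G hG x hx a ha z hz hxa haz hxG hzG⟩

theorem isCap_iff {A : Set α} :
    IsCap F A ↔ ∀ G ∈ F, ∀ x ∈ A, ∀ y ∈ A, ∀ z ∈ A, x < y → y < z → x ∈ G → z ∈ G → y ∈ G := by
  constructor
  · intro h G hG x hx y hy z hz hxy hyz hxG hzG
    by_contra hyG
    exact h y hy G hG ⟨fun hy' => hyG hy'.2, ⟨x, ⟨hx, hxG⟩, hxy⟩, ⟨z, ⟨hz, hzG⟩, hyz⟩⟩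
  · rintro h a ha G hG ⟨haG, ⟨x, ⟨hx, hxG⟩, hxa⟩, ⟨z, ⟨hz, hzG⟩, haz⟩⟩
    exact haG ⟨ha, h G hG x hx a ha z hz hxa haz hxG hzG⟩

theorem Finset.two_lt_card_of_lt_of_lt {A : Finset α} {x y z : α} (hx : x ∈ A) (hy : y ∈ A)
    (hz : z ∈ A) (hxy : x < y) (hyz : y < z) : 2 < #A :=
  two_lt_card.2 ⟨x, hx, y, hy, z, hz, hxy.ne, (hxy.trans hyz).ne, hyz.ne⟩

theorem isCup_of_card_le_two {A : Finset α} (h : #A ≤ 2) : IsCup F ↑A :=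
  isCup_iff.2 fun _ _ _ hx _ hy _ hz hxy hyz =>
    absurd (two_lt_card_of_lt_of_lt hx hy hz hxy hyz) h.not_gt

theorem isCap_of_card_le_two {A : Finset α} (h : #A ≤ 2) : IsCap F ↑A :=
  isCap_iff.2 fun _ _ _ hx _ hy _ hz hxy hyz =>
    absurd (two_lt_card_of_lt_of_lt hx hy hz hxy hyz) h.not_gt

theorem IsCup.exists_of_not_isCup_insert {C : Finset α} {p d : α} (hC : IsCup F ↑C)
    (hpC : p ∈ C) (hCp : ∀ c ∈ C, c ≤ p) (hpd : p < d) (hnot : ¬ IsCup F ↑(insert d C)) :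
    ∃ G ∈ F, ∃ c ∈ C, c < p ∧ c ∉ G ∧ p ∈ G ∧ d ∉ G := by
  rw [isCup_iff] at hnot
  push Not at hnot
  obtain ⟨G, hG, x, hx, y, hy, z, hz, hxy, hyz, hxG, hzG, hyG⟩ := hnot
  simp only [coe_insert, Set.mem_insert_iff, mem_coe] at hx hy hz
  have hle : ∀ t, t = d ∨ t ∈ C → t ≤ d := by
    rintro t (rfl | ht)
    exacts [le_rfl, (hCp t ht).trans hpd.le]
  have hyC : y ∈ C := hy.resolve_left (hyz.trans_le (hle z hz)).ne
  have hxC : x ∈ C := hx.resolve_left (hxy.trans_le (hle y hy)).ne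
  have hzd : z = d := hz.resolve_right fun hzC =>
    isCup_iff.1 hC G hG x hxC y hyC z hzC hxy hyz hxG hzG hyG
  have hpG : p ∈ G := by
    by_contra hpG
    have hyp : y < p := (hCp y hyC).lt_of_ne fun h => hpG (h ▸ hyG)
    exact isCup_iff.1 hC G hG x hxC y hyC p hpC hxy hyp hxG hpG hyG
  exact ⟨G, hG, x, hxC, hxy.trans_le (hCp y hyC), hxG, hpG, hzd ▸ hzG⟩

theorem IsCap.isCap_insert_of_lt (hABA : ABAFree F) {D : Finset α} {G : Set α} {p c : α}
    (hD : IsCap F ↑D) (hpD : p ∈ D) (hDp : ∀ d ∈ D, p ≤ d) (hG : G ∈ F) (hpG : p ∈ G)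
    (hDG : ∀ d ∈ D, p < d → d ∉ G) (hcp : c < p) (hcG : c ∉ G) : IsCap F ↑(insert c D) := by
  rw [isCap_iff]
  intro H hH x hx y hy z hz hxy hyz hxH hzH
  by_contra hyH
  simp only [coe_insert, Set.mem_insert_iff, mem_coe] at hx hy hz
  have hge : ∀ t, t = c ∨ t ∈ D → c ≤ t := by
    rintro t (rfl | ht)
    exacts [le_rfl, hcp.le.trans (hDp t ht)]
  have hyD : y ∈ D := hy.resolve_left (hge x hx |>.trans_lt hxy).ne'
  have hzD : z ∈ D := hz.resolve_left (hge y hy |>.trans_lt hyz).ne'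
  have hxc : x = c := hx.resolve_right fun hxD =>
    hyH (isCap_iff.1 hD H hH x hxD y hyD z hzD hxy hyz hxH hzH)
  have hpH : p ∉ H := by
    intro hpH
    rcases (hDp y hyD).lt_or_eq with hpy | rfl
    · exact hyH (isCap_iff.1 hD H hH p hpD y hyD z hzD hpy hyz hpH hzH)
    · exact hyH hpH
  have hpz : p < z := (hDp y hyD).trans_lt hyz
  exact hABA ⟨H, hH, G, hG, c, p, z, hcp, hpz, hxc ▸ hxH, hcG, hzH, hDG z hzD hpz, hpG, hpH⟩

theorem cup_or_cap_extension (hABA : ABAFree F) {C D : Finset α} {p d : α}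
    (hC : IsCup F ↑C) (hD : IsCap F ↑D) (hpC : p ∈ C) (hCp : ∀ c ∈ C, c ≤ p)
    (hpD : p ∈ D) (hDp : ∀ e ∈ D, p ≤ e) (hdD : d ∈ D) (hpd : p < d)
    (hd : ∀ e ∈ D, p < e → d ≤ e) :
    IsCup F ↑(insert d C) ∨ ∃ c ∈ C, c < p ∧ IsCap F ↑(insert c D) := by
  refine or_iff_not_imp_left.2 fun hnot => ?_
  obtain ⟨G, hG, c, hcC, hcp, hcG, hpG, hdG⟩ := hC.exists_of_not_isCup_insert hpC hCp hpd hnot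
  refine ⟨c, hcC, hcp, hD.isCap_insert_of_lt hABA hpD hDp hG hpG ?_ hcp hcG⟩
  intro e heD hpe heG
  rcases (hd e heD hpe).lt_or_eq with hde | rfl
  · exact hdG (isCap_iff.1 hD G hG p hpD d hdD e heD hpd hde hpG heG)
  · exact hdG heG

def HasCupOrCap (F : Set (Set α)) (s : Finset α) (k l : ℕ) : Prop :=
  (∃ A ⊆ s, #A = k ∧ IsCup F ↑A) ∨ (∃ B ⊆ s, #B = l ∧ IsCap F ↑B)

theorem HasCupOrCap.mono {s t : Finset α} {k l : ℕ} (hst : s ⊆ t) :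
    HasCupOrCap F s k l → HasCupOrCap F t k l := by
  rintro (⟨A, hAs, hA⟩ | ⟨B, hBs, hB⟩)
  exacts [Or.inl ⟨A, hAs.trans hst, hA⟩, Or.inr ⟨B, hBs.trans hst, hB⟩]

theorem hasCupOrCap_of_cup_cap_meet (hABA : ABAFree F) {s C D : Finset α} {p : α}
    (hCs : C ⊆ s) (hDs : D ⊆ s) (hC : IsCup F ↑C) (hD : IsCap F ↑D) (hpC : p ∈ C)
    (hCp : ∀ c ∈ C, c ≤ p) (hpD : p ∈ D) (hDp : ∀ e ∈ D, p ≤ e) (hD2 : 2 ≤ #D) :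
    HasCupOrCap F s (#C + 1) (#D + 1) := by
  obtain ⟨e, heD, hep⟩ := exists_mem_ne hD2 p
  have hne : (D.filter (p < ·)).Nonempty := ⟨e, mem_filter.2 ⟨heD, (hDp e heD).lt_of_ne' hep⟩⟩
  obtain ⟨hdD, hpd⟩ := mem_filter.1 ((D.filter (p < ·)).min'_mem hne)
  rcases cup_or_cap_extension hABA hC hD hpC hCp hpD hDp hdD hpd
      (fun e he hpe => min'_le _ e (mem_filter.2 ⟨he, hpe⟩)) with hcup | ⟨c, hcC, hcp, hcap⟩
  · refine Or.inl ⟨_, insert_subset (hDs hdD) hCs, card_insert_of_notMem ?_, hcup⟩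
    exact fun h => (hCp _ h).not_gt hpd
  · refine Or.inr ⟨_, insert_subset (hCs hcC) hDs, card_insert_of_notMem ?_, hcap⟩
    exact fun h => (hDp c h).not_gt hcp

theorem hasCupOrCap_succ_succ (hABA : ABAFree F) {i j : ℕ}
    (hi : ∀ s : Finset α, (i + (j + 1)).choose i < #s → HasCupOrCap F s (i + 2) (j + 3))
    (hj : ∀ s : Finset α, (i + 1 + j).choose (i + 1) < #s → HasCupOrCap F s (i + 3) (j + 2))
    (s : Finset α) (hs : (i + 1 + (j + 1)).choose (i + 1) < #s) :
    HasCupOrCap F s (i + 3) (j + 3) := by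
  classical
  rw [show i + 1 + (j + 1) = i + (j + 1) + 1 by omega, Nat.choose_succ_succ',
    show i + (j + 1) = i + 1 + j by omega] at hs
  set T := s.filter fun p => ∃ C ⊆ s, #C = i + 2 ∧ IsCup F ↑C ∧ p ∈ C ∧ ∀ c ∈ C, c ≤ p
  set U := s.filter fun p => ¬ ∃ C ⊆ s, #C = i + 2 ∧ IsCup F ↑C ∧ p ∈ C ∧ ∀ c ∈ C, c ≤ p
  have hsplit : #T + #U = #s := card_filter_add_card_filter_not _
  by_cases hU : (i + 1 + j).choose i < #U
  · rcases hi U (by rwa [show i + (j + 1) = i + 1 + j by omega]) with ⟨C, hCU, hC, hCcup⟩ | hcap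
    · have hne : C.Nonempty := card_pos.1 (by omega)
      exact absurd ⟨C, hCU.trans (filter_subset _ s), hC, hCcup, C.max'_mem hne, C.le_max'⟩
        (mem_filter.1 (hCU (C.max'_mem hne))).2
    · exact HasCupOrCap.mono (filter_subset _ s) (Or.inr hcap)
  · rcases hj T (by omega) with hcup | ⟨D, hDT, hD, hDcap⟩
    · exact HasCupOrCap.mono (filter_subset _ s) (Or.inl hcup)
    · have hne : D.Nonempty := card_pos.1 (by omega)
      obtain ⟨C, hCs, hC, hCcup, hpC, hCp⟩ := (mem_filter.1 (hDT (D.min'_mem hne))).2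
      have h := hasCupOrCap_of_cup_cap_meet hABA hCs (hDT.trans (filter_subset _ s)) hCcup hDcap
        hpC hCp (D.min'_mem hne) D.min'_le (by omega)
      rwa [hC, hD] at h

theorem hasCupOrCap_of_choose_lt_card (hABA : ABAFree F) (i j : ℕ) (s : Finset α)
    (hs : (i + j).choose i < #s) : HasCupOrCap F s (i + 2) (j + 2) := by
  induction i generalizing j s with
  | zero =>
    obtain ⟨A, hAs, hA⟩ := exists_subset_card_eq (Nat.succ_le_of_lt (by simpa using hs))
    exact Or.inl ⟨A, hAs, hA, isCup_of_card_le_two hA.le⟩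
  | succ i ih =>
    induction j generalizing s with
    | zero =>
      obtain ⟨B, hBs, hB⟩ := exists_subset_card_eq (Nat.succ_le_of_lt (by simpa using hs))
      exact Or.inr ⟨B, hBs, hB, isCap_of_card_le_two hB.le⟩
    | succ j ihj => exact hasCupOrCap_succ_succ hABA (ih (j + 1)) ihj s hs

end

/-- Cup-Cap theorem for pseudoconvex sets: a pseudohalfplane hypergraph on at least
`(k+l-4 choose k-2) + 1` vertices contains a `k`-cup or an `l`-cap. -/
theorem cup_cap_theorem {α : Type*} [LinearOrder α] [Fintype α]
    (k l : ℕ) (hk : 2 ≤ k) (hl : 2 ≤ l)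
    (F : Set (Set α)) (hABA : ABAFree F)
    (hcard : Nat.choose (k + l - 4) (k - 2) + 1 ≤ Fintype.card α) :
    (∃ A : Finset α, A.card = k ∧ IsCup F ↑A) ∨
    (∃ B : Finset α, B.card = l ∧ IsCap F ↑B) := by
  obtain ⟨i, rfl⟩ := Nat.exists_eq_add_of_le' hk
  obtain ⟨j, rfl⟩ := Nat.exists_eq_add_of_le' hl
  rw [show i + 2 + (j + 2) - 4 = i + j by omega, Nat.add_sub_cancel, ← card_univ] at hcard
  rcases hasCupOrCap_of_choose_lt_card hABA i j univ hcard with ⟨A, -, hA⟩ | ⟨B, -, hB⟩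
  exacts [Or.inl ⟨A, hA⟩, Or.inr ⟨B, hB⟩]
end
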